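/- arXiv:1801.06034 — 8 statements merged into one kernel-verified Lean document; each statement's English description precedes it below -/
import Mathlib

section
/- Let G = ∏_{i=1}^n ℤ_{m_i} be a finite product of cyclic groups, and let f : G → {0,1} be expressible as f(x_1,...,x_n) = ∑_{i=1}^n φ_i(x_i) for arbitrary real-valued functions φ_i : ℤ_{m_i} → ℝ. Then there exists a single index i and a function φ : ℤ_{m_i} → {0,1} such that f(x) = φ(x_i) for all x; that is, f depends on at most one coordinate. -/
private lemma sum_update_key {n : ℕ} {m : Fin n → ℕ} (φ : ∀ i, ZMod (m i) → ℝ)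
    (x : ∀ i, ZMod (m i)) (i : Fin n) (a : ZMod (m i)) :
    ∑ j, φ j (Function.update x i a j) = φ i a - φ i (x i) + ∑ j, φ j (x j) := by
  have h : ∑ j, (φ j (Function.update x i a j) - φ j (x j)) = φ i a - φ i (x i) := by
    rw [Finset.sum_eq_single i]
    · simp
    · intro j _ hj
      rw [Function.update_of_ne hj]
      ring
    · simp
  rw [Finset.sum_sub_distrib] at h
  linarith

/-- A Boolean degree 1 function on a finite product of cyclic groups
depends on at most one coordinate. -/
theorem boolean_degree_one_abelian (n : ℕ) (hn : 0 < n) (m : Fin n → ℕ)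
    (hm : ∀ i, 0 < m i)
    (f : (∀ i, ZMod (m i)) → ℝ)
    (hbool : ∀ x, f x = 0 ∨ f x = 1)
    (hdeg : ∃ φ : ∀ i, ZMod (m i) → ℝ, ∀ x, f x = ∑ i, φ i (x i)) :
    ∃ (i : Fin n) (ψ : ZMod (m i) → ℝ),
      (∀ a, ψ a = 0 ∨ ψ a = 1) ∧ ∀ x, f x = ψ (x i) := by
  obtain ⟨φ, hφ⟩ := hdeg
  set x0 : ∀ i, ZMod (m i) := fun j => 0 with hx0
  by_cases hc : ∃ i, ∃ a : ZMod (m i), φ i a ≠ φ i 0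
  · obtain ⟨i, a, ha⟩ := hc
    -- all other coordinates are constant
    have hconst : ∀ j, j ≠ i → ∀ b : ZMod (m j), φ j b = φ j 0 := by
      by_contra hcon
      push_neg at hcon
      obtain ⟨j, hji, b, hb⟩ := hcon
      set xa := Function.update x0 i a with hxa
      set xb := Function.update x0 j b with hxb
      set xab := Function.update xa j b with hxab
      have e1 : f xa = φ i a - φ i 0 + f x0 := by
        rw [hφ, hφ, hxa, sum_update_key]
      have e2 : f xb = φ j b - φ j 0 + f x0 := by
        rw [hφ, hφ, hxb, sum_update_key]
      have e3 : f xab = φ j b - φ j 0 + f xa := by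
        rw [hφ, hφ, hxab, sum_update_key, hxa, Function.update_of_ne hji]
      rcases hbool x0 with h0 | h0 <;> rcases hbool xa with h1 | h1 <;>
        rcases hbool xb with h2 | h2 <;> rcases hbool xab with h3 | h3 <;>
        first
          | linarith
          | exact ha (by linarith)
          | exact hb (by linarith)
    refine ⟨i, fun b => f (Function.update x0 i b), fun b => hbool _, fun x => ?_⟩
    show f x = f (Function.update x0 i (x i))
    rw [hφ, hφ, sum_update_key]
    have h : ∑ j, (φ j (x j) - φ j (x0 j)) = φ i (x i) - φ i (x0 i) := by
      rw [Finset.sum_eq_single i]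
      · intro j _ hj
        rw [hconst j hj (x j)]
        simp [hx0]
      · simp
    rw [Finset.sum_sub_distrib] at h
    have : x0 i = 0 := rfl
    rw [this] at h
    linarith
  · push_neg at hc
    refine ⟨⟨0, hn⟩, fun _ => f x0, fun _ => hbool _, fun x => ?_⟩
    rw [hφ, hφ]
    exact Finset.sum_congr rfl fun j _ => by rw [hc j (x j)]
end

section
/- Let D = D_1 × ⋯ × D_n be a product of finite sets each of size at least 2, and let f : D → {0,1} satisfy f(x) = ∑_{i=1}^n φ_i(x_i) for real-valued functions φ_i : D_i → ℝ. Then at most one of the functions φ_i is non-constant; consequently f depends on at most one coordinate. -/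
/-- If a Boolean function on a product of finite sets (each of size ≥ 2)
is a sum of univariate functions, then at most one summand is non-constant, and
consequently the function depends on at most one coordinate. -/
theorem boolean_degree_one_product (ι : Type*) [Fintype ι] [Nonempty ι]
    (D : ι → Type*) [∀ i, Fintype (D i)] (hD : ∀ i, 2 ≤ Fintype.card (D i))
    (f : (∀ i, D i) → ℝ)
    (hbool : ∀ x, f x = 0 ∨ f x = 1)
    (φ : ∀ i, D i → ℝ)
    (hdeg : ∀ x, f x = ∑ i, φ i (x i)) :
    (∀ i j, i ≠ j → (∀ a b, φ i a = φ i b) ∨ (∀ a b, φ j a = φ j b)) ∧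
    (∃ i : ι, ∀ x y : (∀ i, D i), x i = y i → f x = f y) := by
  classical
  have hne : ∀ i, Nonempty (D i) := fun i =>
    Fintype.card_pos_iff.mp (by have := hD i; omega)
  have hdiff : ∀ (x : ∀ i, D i) (i : ι) (a : D i),
      f (Function.update x i a) - f x = φ i a - φ i (x i) := by
    intro x i a
    rw [hdeg, hdeg, ← Finset.sum_sub_distrib, Finset.sum_eq_single i]
    · simp
    · intro j _ hji
      simp [Function.update_of_ne hji]
    · simp
  have key : ∀ i j, i ≠ j → (∀ a b, φ i a = φ i b) ∨ (∀ a b, φ j a = φ j b) := by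
    intro i j hij
    by_contra h
    push_neg at h
    obtain ⟨⟨a, b, hab⟩, ⟨c, d, hcd⟩⟩ := h
    have : ∀ k, Nonempty (D k) := hne
    set x0 : ∀ k, D k := fun k => Classical.arbitrary (D k) with hx0
    set u : ∀ k, D k := Function.update (Function.update x0 i b) j c with hu
    have hui : u i = b := by
      simp [hu, Function.update_of_ne hij]
    have huj : u j = c := by simp [hu]
    set v : ∀ k, D k := Function.update u j d with hv
    have hvi : v i = b := by simp [hv, Function.update_of_ne hij, hui]
    -- A = f (update u i a), B = f u, C = f (update v i a), D = f v
    have h1 : f (Function.update u i a) - f u = φ i a - φ i b := by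
      rw [hdiff, hui]
    have h2 : f (Function.update v i a) - f v = φ i a - φ i b := by
      rw [hdiff, hvi]
    have hcomm : Function.update v i a = Function.update (Function.update u i a) j d := by
      rw [hv, Function.update_comm hij.symm]
    have h3 : f (Function.update v i a) - f (Function.update u i a) = φ j d - φ j c := by
      rw [hcomm, hdiff]
      congr 2
      rw [Function.update_of_ne (Ne.symm hij), huj]
    have hab' : φ i a - φ i b ≠ 0 := sub_ne_zero.mpr hab
    have hcd' : φ j d - φ j c ≠ 0 := sub_ne_zero.mpr (Ne.symm hcd)
    rcases hbool (Function.update u i a) with hA | hA <;>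
      rcases hbool u with hB | hB <;>
      rcases hbool (Function.update v i a) with hC | hC <;>
      rcases hbool v with hE | hE <;>
      rw [hA, hB] at h1 <;> rw [hC, hE] at h2 <;> rw [hC, hA] at h3 <;>
      first
        | exact hab' (by linarith)
        | exact hcd' (by linarith)
        | linarith
  refine ⟨key, ?_⟩
  by_cases hc : ∀ i, ∀ a b : D i, φ i a = φ i b
  · exact ⟨Classical.arbitrary ι, fun x y _ => by
      rw [hdeg, hdeg]; exact Finset.sum_congr rfl fun i _ => hc i _ _⟩
  · push_neg at hc
    obtain ⟨i0, a, b, hab⟩ := hc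
    refine ⟨i0, fun x y hxy => ?_⟩
    rw [hdeg, hdeg]
    refine Finset.sum_congr rfl fun j _ => ?_
    by_cases hj : j = i0
    · subst hj; rw [hxy]
    · rcases key i0 j (Ne.symm hj) with h | h
      · exact absurd (h a b) hab
      · exact h _ _
end

section
/- For all n and k with k ≥ 2 and n − k ≥ 2, every Boolean degree 1 function on the Johnson scheme J(n,k) is either constant, or equal to S ↦ 1_{i ∈ S} for some element i ∈ {1,...,n}, or equal to S ↦ 1_{i ∉ S} for some i. -/
/-- The Johnson scheme `J(n,k)`: the `k`-element subsets of an `n`-element set. -/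
def JDom (n k : ℕ) := {S : Finset (Fin n) // S.card = k}

/-- A Boolean function on `J(n,k)` has degree 1 if
`f(S) = c + ∑_{i ∈ S} c_i` for real constants `c, c_1, …, c_n`. -/
def JDegOne {n k : ℕ} (f : JDom n k → Bool) : Prop :=
  ∃ (c : ℝ) (C : Fin n → ℝ), ∀ S : JDom n k,
    (if f S then (1 : ℝ) else 0) = c + ∑ i ∈ S.val, C i

/-- A Boolean function on `J(n,k)` is trivial if it is constant, or the indicator
`S ↦ 1_{i ∈ S}` of a coordinate, or its complement `S ↦ 1_{i ∉ S}`. -/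
def JTrivial {n k : ℕ} (f : JDom n k → Bool) : Prop :=
  (∃ b : Bool, ∀ S, f S = b) ∨
  (∃ i : Fin n, ∀ S : JDom n k, (f S = true ↔ i ∈ S.val)) ∨
  (∃ i : Fin n, ∀ S : JDom n k, (f S = true ↔ i ∉ S.val))

/-- We can find a `k`-set with prescribed intersection size with `A`. -/
lemma exists_card_inter (n k t : ℕ) (A : Finset (Fin n)) (h1 : t ≤ A.card)
    (h2 : k - t ≤ n - A.card) (h3 : t ≤ k) :
    ∃ S : Finset (Fin n), S.card = k ∧ (S ∩ A).card = t := by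
  obtain ⟨T, hTA, hT⟩ := Finset.exists_subset_card_eq h1
  have hAle : A.card ≤ n := by
    simpa using Finset.card_le_card (Finset.subset_univ A)
  have hAc : k - t ≤ Aᶜ.card := by
    rw [Finset.card_compl, Fintype.card_fin]; exact h2
  obtain ⟨U, hUA, hU⟩ := Finset.exists_subset_card_eq hAc
  have hdisj : Disjoint T U := by
    rw [Finset.disjoint_left]
    intro x hxT hxU
    exact (Finset.mem_compl.1 (hUA hxU)) (hTA hxT)
  refine ⟨T ∪ U, ?_, ?_⟩
  · rw [Finset.card_union_of_disjoint hdisj, hT, hU]; omega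
  · have hUe : U ∩ A = ∅ := by
      rw [Finset.eq_empty_iff_forall_notMem]
      intro x hx
      rw [Finset.mem_inter] at hx
      exact (Finset.mem_compl.1 (hUA hx.1)) hx.2
    rw [Finset.union_inter_distrib_right, Finset.inter_eq_left.2 hTA, hUe,
      Finset.union_empty, hT]

lemma card_inter_singleton {n : ℕ} (S : Finset (Fin n)) (i : Fin n) :
    (S ∩ {i}).card = if i ∈ S then 1 else 0 := by
  by_cases h : i ∈ S
  · rw [Finset.inter_singleton_of_mem h, if_pos h, Finset.card_singleton]
  · rw [Finset.inter_singleton_of_notMem h, if_neg h, Finset.card_empty]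

/-- For `k ≥ 2` and `n − k ≥ 2`, every Boolean degree 1 function on
`J(n,k)` is constant, or `S ↦ 1_{i ∈ S}`, or `S ↦ 1_{i ∉ S}`. -/
theorem boolean_degree_one_johnson (n k : ℕ) (hk : 2 ≤ k) (hnk : 2 ≤ n - k)
    (f : JDom n k → Bool) (hdeg : JDegOne f) :
    JTrivial f := by
  obtain ⟨c, C, hC⟩ := hdeg
  have hkn : k + 2 ≤ n := by omega
  -- a minimal coefficient
  obtain ⟨i0, -, hi0⟩ := Finset.exists_min_image (Finset.univ : Finset (Fin n)) C
    ⟨⟨0, by omega⟩, Finset.mem_univ _⟩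
  set a : ℝ := C i0 with ha
  -- every coefficient is `a` or `a+1`
  have hstep : ∀ i : Fin n, C i = a ∨ C i = a + 1 := by
    intro i
    by_cases hii : i = i0
    · left; rw [hii]
    · have hcompl : k - 1 ≤ ({i, i0} : Finset (Fin n))ᶜ.card := by
        rw [Finset.card_compl, Fintype.card_fin]
        have : ({i, i0} : Finset (Fin n)).card = 2 := by
          rw [Finset.card_insert_of_notMem (by simpa using hii), Finset.card_singleton]
        omega
      obtain ⟨B, hB, hBcard⟩ := Finset.exists_subset_card_eq hcompl
      have hiB : i ∉ B := fun h => (Finset.mem_compl.1 (hB h)) (by simp)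
      have hi0B : i0 ∉ B := fun h => (Finset.mem_compl.1 (hB h)) (by simp)
      set S1 : JDom n k := ⟨insert i B, by
        rw [Finset.card_insert_of_notMem hiB, hBcard]; omega⟩
      set S2 : JDom n k := ⟨insert i0 B, by
        rw [Finset.card_insert_of_notMem hi0B, hBcard]; omega⟩
      have h1 := hC S1
      have h2 := hC S2
      have hs1 : ∑ x ∈ S1.val, C x = C i + ∑ x ∈ B, C x := Finset.sum_insert hiB
      have hs2 : ∑ x ∈ S2.val, C x = C i0 + ∑ x ∈ B, C x := Finset.sum_insert hi0B
      rw [hs1] at h1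
      rw [hs2] at h2
      have hmin : a ≤ C i := hi0 i (Finset.mem_univ i)
      cases hf1 : f S1 <;> cases hf2 : f S2 <;>
        rw [hf1] at h1 <;> rw [hf2] at h2 <;> simp at h1 h2
      · left; linarith
      · exfalso; linarith
      · right; linarith
      · left; linarith
  set A : Finset (Fin n) := Finset.univ.filter (fun i => C i = a + 1) with hA
  set b : ℝ := c + k * a with hb
  -- the key formula
  have key : ∀ S : JDom n k, (if f S then (1 : ℝ) else 0) = b + ((S.val ∩ A).card : ℝ) := by
    intro S
    rw [hC S]
    have hsum : ∑ i ∈ S.val, C i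
        = ∑ i ∈ S.val, (a + if i ∈ A then (1 : ℝ) else 0) := by
      refine Finset.sum_congr rfl fun i _ => ?_
      rcases hstep i with h | h
      · have : i ∉ A := by
          simp only [hA, Finset.mem_filter, Finset.mem_univ, true_and]
          intro hcon; rw [h] at hcon; linarith
        rw [if_neg this, h, add_zero]
      · have : i ∈ A := by
          simp only [hA, Finset.mem_filter, Finset.mem_univ, true_and]; exact h
        rw [if_pos this, h]
    rw [hsum, Finset.sum_add_distrib, Finset.sum_const, S.prop, Finset.sum_boole,
      Finset.filter_mem_eq_inter, hb]
    push_cast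
    ring
  -- boolean values of card(S ∩ A) constant implies f constant
  have hAle : A.card ≤ n := by simpa using Finset.card_le_card (Finset.subset_univ A)
  have hne : ∃ S0 : JDom n k, True := by
    obtain ⟨S, _, hS⟩ := Finset.exists_subset_card_eq
      (show k ≤ (Finset.univ : Finset (Fin n)).card by
        rw [Finset.card_univ, Fintype.card_fin]; omega)
    exact ⟨⟨S, hS⟩, trivial⟩
  obtain ⟨S0, -⟩ := hne
  by_cases hm0 : A.card = 0
  · -- constant
    left
    refine ⟨f S0, fun S => ?_⟩
    have hAe : A = ∅ := Finset.card_eq_zero.1 hm0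
    have h1 := key S
    have h2 := key S0
    rw [hAe, Finset.inter_empty] at h1 h2
    cases hfS : f S <;> cases hfS0 : f S0 <;>
      rw [hfS] at h1 <;> rw [hfS0] at h2 <;>
        simp at h1 h2 <;>
        first | rfl | (exfalso; linarith)
  · by_cases hmn : A.card = n
    · -- A = univ, constant
      left
      refine ⟨f S0, fun S => ?_⟩
      have hAu : A = Finset.univ := by
        apply Finset.eq_univ_of_card
        rw [hmn, Fintype.card_fin]
      have h1 := key S
      have h2 := key S0
      rw [hAu, Finset.inter_univ, S.prop] at h1
      rw [hAu, Finset.inter_univ, S0.prop] at h2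
      cases hfS : f S <;> cases hfS0 : f S0 <;>
        rw [hfS] at h1 <;> rw [hfS0] at h2 <;>
          simp at h1 h2 <;>
          first | rfl | (exfalso; linarith)
    · by_cases hm1 : A.card = 1
      · -- dictator 1_{i ∈ S}
        obtain ⟨i, hi⟩ := Finset.card_eq_one.1 hm1
        have keyi : ∀ S : JDom n k,
            (if f S then (1 : ℝ) else 0) = b + (if i ∈ S.val then (1 : ℝ) else 0) := by
          intro S
          rw [key S, hi, card_inter_singleton]
          by_cases h : i ∈ S.val <;> simp [h]
        -- sets with and without i
        obtain ⟨Sin, hSin, hSini⟩ := exists_card_inter n k 1 A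
          (by omega) (by omega) (by omega)
        obtain ⟨Sout, hSout, hSouti⟩ := exists_card_inter n k 0 A
          (by omega) (by omega) (by omega)
        have hiin : i ∈ Sin := by
          rw [hi, card_inter_singleton] at hSini
          by_contra h; rw [if_neg h] at hSini; omega
        have hiout : i ∉ Sout := by
          rw [hi, card_inter_singleton] at hSouti
          by_contra h; rw [if_pos h] at hSouti; omega
        have h1 := keyi ⟨Sin, hSin⟩
        have h2 := keyi ⟨Sout, hSout⟩
        rw [if_pos hiin] at h1
        rw [if_neg hiout] at h2
        have hb0 : b = 0 := by
          cases hf1 : f (⟨Sin, hSin⟩ : JDom n k) <;>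
            cases hf2 : f (⟨Sout, hSout⟩ : JDom n k) <;>
            rw [hf1] at h1 <;> rw [hf2] at h2 <;>
            simp at h1 h2 <;> linarith
        right; left
        refine ⟨i, fun S => ?_⟩
        have h3 := keyi S
        rw [hb0, zero_add] at h3
        constructor
        · intro hfS
          rw [hfS] at h3
          by_contra h
          rw [if_pos rfl, if_neg h] at h3
          linarith
        · intro hmem
          rw [if_pos hmem] at h3
          cases hfS : f S
          · rw [hfS] at h3; simp at h3
          · rfl
      · by_cases hmn1 : A.card = n - 1
        · -- anti-dictator 1_{j ∉ S}
          have hAcc : Aᶜ.card = 1 := by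
            rw [Finset.card_compl, Fintype.card_fin, hmn1]; omega
          obtain ⟨j, hj⟩ := Finset.card_eq_one.1 hAcc
          have hAj : A = {j}ᶜ := by rw [← hj, compl_compl]
          have hcard : ∀ S : JDom n k,
              ((S.val ∩ A).card : ℝ) = k - (if j ∈ S.val then (1 : ℝ) else 0) := by
            intro S
            have h1 : S.val ∩ A = S.val \ {j} := by
              rw [hAj]; ext x; simp
            have h2 : (S.val \ {j}).card + (S.val ∩ {j}).card = S.val.card :=
              Finset.card_sdiff_add_card_inter _ _
            rw [h1]
            rw [card_inter_singleton, S.prop] at h2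
            by_cases h : j ∈ S.val
            · rw [if_pos h]; rw [if_pos h] at h2
              have : (S.val \ {j}).card = k - 1 := by omega
              rw [this]
              have : 1 ≤ k := by omega
              push_cast [Nat.cast_sub this]
              ring
            · rw [if_neg h]; rw [if_neg h] at h2
              have : (S.val \ {j}).card = k := by omega
              rw [this]; ring
          have keyj : ∀ S : JDom n k,
              (if f S then (1 : ℝ) else 0)
                = (b + k - 1) + (if j ∈ S.val then (0 : ℝ) else 1) := by
            intro S
            rw [key S, hcard S]
            by_cases h : j ∈ S.val <;> simp [h] <;> ring
          -- sets with and without j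
          obtain ⟨Sin, hSin, hSini⟩ := exists_card_inter n k 1 ({j} : Finset (Fin n))
            (by simp) (by rw [Finset.card_singleton]; omega) (by omega)
          obtain ⟨Sout, hSout, hSouti⟩ := exists_card_inter n k 0 ({j} : Finset (Fin n))
            (by omega) (by rw [Finset.card_singleton]; omega) (by omega)
          have hjin : j ∈ Sin := by
            rw [card_inter_singleton] at hSini
            by_contra h; rw [if_neg h] at hSini; omega
          have hjout : j ∉ Sout := by
            rw [card_inter_singleton] at hSouti
            by_contra h; rw [if_pos h] at hSouti; omega
          have h1 := keyj ⟨Sin, hSin⟩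
          have h2 := keyj ⟨Sout, hSout⟩
          rw [if_pos hjin] at h1
          rw [if_neg hjout] at h2
          have hb0 : b + k - 1 = 0 := by
            cases hf1 : f (⟨Sin, hSin⟩ : JDom n k) <;>
              cases hf2 : f (⟨Sout, hSout⟩ : JDom n k) <;>
              rw [hf1] at h1 <;> rw [hf2] at h2 <;>
              simp at h1 h2 <;> linarith
          right; right
          refine ⟨j, fun S => ?_⟩
          have h3 := keyj S
          rw [hb0, zero_add] at h3
          constructor
          · intro hfS
            rw [hfS] at h3
            intro h
            rw [if_pos rfl, if_pos h] at h3
            linarith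
          · intro hmem
            rw [if_neg hmem] at h3
            cases hfS : f S
            · rw [hfS] at h3; simp at h3
            · rfl
        · -- middle case: contradiction
          exfalso
          have hm2 : 2 ≤ A.card ∧ A.card ≤ n - 2 := by omega
          set t0 := k - (n - A.card) with ht0
          obtain ⟨T0, hT0, hT0c⟩ := exists_card_inter n k t0 A
            (by omega) (by omega) (by omega)
          obtain ⟨T2, hT2, hT2c⟩ := exists_card_inter n k (t0 + 2) A
            (by omega) (by omega) (by omega)
          have h0 := key ⟨T0, hT0⟩
          have h2 := key ⟨T2, hT2⟩
          rw [hT0c] at h0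
          rw [hT2c] at h2
          push_cast at h0 h2
          cases hf0 : f (⟨T0, hT0⟩ : JDom n k) <;>
            cases hf2 : f (⟨T2, hT2⟩ : JDom n k) <;>
            rw [hf0] at h0 <;> rw [hf2] at h2 <;>
            simp at h0 h2 <;> linarith
end

section
/- Pair lemma for the Johnson scheme: let k, ℓ ≥ 2 and suppose every Boolean degree 1 function on J(k+ℓ,k) is trivial (constant or 1_{x ∈ S} or 1_{x ∉ S}). Let f be a Boolean degree 1 function on J(k+ℓ+1, k+1), and for a coordinate a let f_a denote the restriction of f to sets containing a. Then for any distinct a, b, one of the following holds: (1) f_a and f_b are equal constants; (2) f_a = f_b = 1_{x ∈ S} (or both equal 1_{x ∉ S}) for the same x ∉ {a,b}; (3) f_a is the constant 1 and f_b(S) = 1_{a ∈ S}, or f_a constant 0 and f_b(S) = 1_{a ∉ S}, or the symmetric cases with a and b exchanged. -/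
lemma johnson_restrict (n k : ℕ)
    (H : ∀ g : JDom n k → Bool, JDegOne g → JTrivial g)
    (f : JDom (n + 1) (k + 1) → Bool) (hdeg : JDegOne f)
    (a : Fin (n + 1)) :
    (∃ c : Bool, ∀ S : JDom (n + 1) (k + 1), a ∈ S.val → f S = c) ∨
    (∃ x : Fin (n + 1), x ≠ a ∧ ∀ S : JDom (n + 1) (k + 1), a ∈ S.val → (f S = true ↔ x ∈ S.val)) ∨
    (∃ x : Fin (n + 1), x ≠ a ∧ ∀ S : JDom (n + 1) (k + 1), a ∈ S.val → (f S = true ↔ x ∉ S.val)) := by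
  obtain ⟨c, C, hC⟩ := hdeg
  set emb : Fin n ↪ Fin (n + 1) := ⟨a.succAbove, Fin.succAbove_right_injective⟩ with hemb
  have hne : ∀ (T : Finset (Fin n)), a ∉ T.map emb := by
    intro T hmem
    obtain ⟨i, _, hi⟩ := Finset.mem_map.mp hmem
    exact Fin.succAbove_ne a i hi
  have hliftcard : ∀ T : JDom n k, (insert a (T.val.map emb)).card = k + 1 := by
    intro T
    rw [Finset.card_insert_of_notMem (hne T.val), Finset.card_map, T.2]
  set lift : JDom n k → JDom (n + 1) (k + 1) := fun T => ⟨insert a (T.val.map emb), hliftcard T⟩ with hlift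
  set g : JDom n k → Bool := fun T => f (lift T) with hg
  have hgdeg : JDegOne g := by
    refine ⟨c + C a, fun i => C (emb i), fun T => ?_⟩
    have := hC (lift T)
    rw [this]
    show c + ∑ i ∈ insert a (T.val.map emb), C i = _
    rw [Finset.sum_insert (hne T.val), Finset.sum_map]
    ring
  -- surjectivity of lift onto sets containing a
  have hsurj : ∀ S : JDom (n + 1) (k + 1), a ∈ S.val → ∃ T : JDom n k, lift T = S := by
    intro S haS
    classical
    have hinj : Set.InjOn emb (emb ⁻¹' ↑(S.val.erase a)) := emb.injective.injOn
    have hrange : ∀ x ∈ S.val.erase a, x ∈ Set.range emb := by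
      intro x hx
      have hxa : x ≠ a := (Finset.mem_erase.mp hx).1
      obtain ⟨z, hz⟩ := Fin.exists_succAbove_eq hxa
      exact ⟨z, hz⟩
    have himg : ((S.val.erase a).preimage emb hinj).map emb = S.val.erase a := by
      rw [Finset.map_eq_image, Finset.image_preimage]
      exact Finset.filter_true_of_mem hrange
    have hcard : ((S.val.erase a).preimage emb hinj).card = k := by
      have := congrArg Finset.card himg
      rw [Finset.card_map] at this
      rw [this, Finset.card_erase_of_mem haS, S.2]
      omega
    refine ⟨⟨_, hcard⟩, ?_⟩
    apply Subtype.ext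
    show insert a _ = S.val
    rw [himg, Finset.insert_erase haS]
  have hmm : ∀ (i : Fin n) (T : Finset (Fin n)), emb i ∈ insert a (T.map emb) ↔ i ∈ T := by
    intro i T
    rw [Finset.mem_insert, Finset.mem_map]
    constructor
    · rintro (h | ⟨x, hx, he⟩)
      · exact absurd h (Fin.succAbove_ne a i)
      · rwa [← emb.injective he]
    · intro h; exact Or.inr ⟨i, h, rfl⟩
  rcases H g hgdeg with ⟨bo, hbo⟩ | ⟨i, hi⟩ | ⟨i, hi⟩
  · left
    refine ⟨bo, fun S haS => ?_⟩
    obtain ⟨T, hT⟩ := hsurj S haS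
    rw [← hT]; exact hbo T
  · right; left
    refine ⟨emb i, Fin.succAbove_ne a i, fun S haS => ?_⟩
    obtain ⟨T, hT⟩ := hsurj S haS
    rw [← hT]
    show g T = true ↔ emb i ∈ insert a (T.val.map emb)
    rw [hi T, hmm i T.val]
  · right; right
    refine ⟨emb i, Fin.succAbove_ne a i, fun S haS => ?_⟩
    obtain ⟨T, hT⟩ := hsurj S haS
    rw [← hT]
    show g T = true ↔ emb i ∉ insert a (T.val.map emb)
    rw [hi T, hmm i T.val]


lemma exists_avoid {n m : ℕ} (A B : Finset (Fin n)) (hAB : Disjoint A B)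
    (hA : A.card ≤ m) (hB : m + B.card ≤ n) :
    ∃ S : Finset (Fin n), A ⊆ S ∧ Disjoint S B ∧ S.card = m := by
  obtain ⟨S, h1, h2, h3⟩ := Finset.exists_subsuperset_card_eq (t := Finset.univ \ B)
    (Finset.subset_sdiff.mpr ⟨Finset.subset_univ _, hAB⟩) hA
    (by rw [Finset.card_univ_diff, Fintype.card_fin]; omega)
  exact ⟨S, h1, (Finset.subset_sdiff.mp h2).2, h3⟩


lemma johnson_bad_case (k l : ℕ) (hk : 2 ≤ k) (hl : 2 ≤ l)
    (f : JDom (k + l + 1) (k + 1) → Bool) (hdeg : JDegOne f)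
    (a b : Fin (k + l + 1)) (hab : a ≠ b) (e : Bool)
    (hcom : ∀ S : JDom (k + l + 1) (k + 1), a ∈ S.val → b ∈ S.val → f S = e)
    (ha : ∀ S : JDom (k + l + 1) (k + 1), a ∈ S.val → b ∉ S.val → f S = !e)
    (hb : ∀ S : JDom (k + l + 1) (k + 1), b ∈ S.val → a ∉ S.val → f S = !e) :
    False := by
  obtain ⟨c, C, hC⟩ := hdeg
  obtain ⟨T, -, hTd, hTc⟩ := exists_avoid (m := k+1) (∅ : Finset (Fin (k+l+1))) {a, b}
    (Finset.disjoint_empty_left _) (by simp) (by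
      have : ({a, b} : Finset (Fin (k+l+1))).card ≤ 2 :=
        (Finset.card_insert_le _ _).trans (by simp)
      omega)
  have haT : a ∉ T := fun h => (Finset.disjoint_left.mp hTd h) (by simp)
  have hbT : b ∉ T := fun h => (Finset.disjoint_left.mp hTd h) (by simp)
  obtain ⟨i0, hi0⟩ := Finset.card_pos.mp (by omega : 0 < T.card)
  obtain ⟨i1, hi1⟩ := Finset.card_pos.mp (by
    rw [Finset.card_erase_of_mem hi0, hTc]; omega : 0 < (T.erase i0).card)
  have hi1T : i1 ∈ T := Finset.mem_of_mem_erase hi1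
  have hi10 : i1 ≠ i0 := (Finset.mem_erase.mp hi1).1
  have hai0 : a ∉ T.erase i0 := fun h => haT (Finset.mem_of_mem_erase h)
  have hbi1 : b ∉ T.erase i1 := fun h => hbT (Finset.mem_of_mem_erase h)
  have hbi01 : b ∉ (T.erase i0).erase i1 := fun h => hbT (Finset.mem_of_mem_erase (Finset.mem_of_mem_erase h))
  have hains : a ∉ insert b ((T.erase i0).erase i1) := by
    simp only [Finset.mem_insert]
    rintro (h | h)
    · exact hab h
    · exact haT (Finset.mem_of_mem_erase (Finset.mem_of_mem_erase h))
  -- the four sets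
  set S1a : JDom (k+l+1) (k+1) := ⟨insert a (T.erase i0), by
    rw [Finset.card_insert_of_notMem hai0, Finset.card_erase_of_mem hi0, hTc]; omega⟩ with hS1a
  set S1b : JDom (k+l+1) (k+1) := ⟨insert b (T.erase i1), by
    rw [Finset.card_insert_of_notMem hbi1, Finset.card_erase_of_mem hi1T, hTc]; omega⟩ with hS1b
  set S2 : JDom (k+l+1) (k+1) := ⟨insert a (insert b ((T.erase i0).erase i1)), by
    rw [Finset.card_insert_of_notMem hains, Finset.card_insert_of_notMem hbi01,
      Finset.card_erase_of_mem hi1, Finset.card_erase_of_mem hi0, hTc]; omega⟩ with hS2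
  set TT : JDom (k+l+1) (k+1) := ⟨T, hTc⟩ with hTT
  -- f values
  have hf1a : f S1a = !e := ha S1a (Finset.mem_insert_self _ _) (by
    simp only [hS1a, Finset.mem_insert]
    rintro (h | h)
    · exact hab h.symm
    · exact hbT (Finset.mem_of_mem_erase h))
  have hf1b : f S1b = !e := hb S1b (Finset.mem_insert_self _ _) (by
    simp only [hS1b, Finset.mem_insert]
    rintro (h | h)
    · exact hab h
    · exact haT (Finset.mem_of_mem_erase h))
  have hf2 : f S2 = e := hcom S2 (Finset.mem_insert_self _ _)
    (Finset.mem_insert_of_mem (Finset.mem_insert_self _ _))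
  -- sum computations
  have e1a := hC S1a
  have e1b := hC S1b
  have e2 := hC S2
  have eT := hC TT
  rw [hf1a] at e1a
  rw [hf1b] at e1b
  rw [hf2] at e2
  have s1a : ∑ i ∈ S1a.val, C i = C a + (∑ i ∈ T, C i - C i0) := by
    show ∑ i ∈ insert a (T.erase i0), C i = _
    rw [Finset.sum_insert hai0, Finset.sum_erase_eq_sub hi0]
  have s1b : ∑ i ∈ S1b.val, C i = C b + (∑ i ∈ T, C i - C i1) := by
    show ∑ i ∈ insert b (T.erase i1), C i = _
    rw [Finset.sum_insert hbi1, Finset.sum_erase_eq_sub hi1T]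
  have s2 : ∑ i ∈ S2.val, C i = C a + (C b + (∑ i ∈ T, C i - C i0 - C i1)) := by
    show ∑ i ∈ insert a (insert b ((T.erase i0).erase i1)), C i = _
    rw [Finset.sum_insert hains, Finset.sum_insert hbi01, Finset.sum_erase_eq_sub hi1,
      Finset.sum_erase_eq_sub hi0]
  rw [s1a] at e1a; rw [s1b] at e1b; rw [s2] at e2
  have hTTv : TT.val = T := rfl
  rw [hTTv] at eT
  cases e with
  | false =>
    simp only [Bool.not_false, if_true] at e1a e1b
    simp only [if_neg (by simp : ¬(false = true))] at e2
    split_ifs at eT <;> linarith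
  | true =>
    simp only [Bool.not_true, if_neg (by simp : ¬(false = true))] at e1a e1b
    simp only [if_true] at e2
    split_ifs at eT <;> linarith


/-- Pair lemma for the Johnson scheme, describing the possible
values of the restrictions `f_a, f_b` of a Boolean degree 1 function on
`J(k+ℓ+1, k+1)` to the sets containing `a`, resp. `b`. -/
theorem johnson_pair_lemma (k l : ℕ) (hk : 2 ≤ k) (hl : 2 ≤ l)
    (H : ∀ g : JDom (k + l) k → Bool, JDegOne g → JTrivial g)
    (f : JDom (k + l + 1) (k + 1) → Bool) (hdeg : JDegOne f)
    (a b : Fin (k + l + 1)) (hab : a ≠ b) :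
    -- (1) `f_a` and `f_b` are equal constants
    (∃ c : Bool, (∀ S : JDom (k + l + 1) (k + 1), a ∈ S.val → f S = c) ∧
      (∀ S : JDom (k + l + 1) (k + 1), b ∈ S.val → f S = c)) ∨
    -- (2) `f_a = f_b = 1_{x ∈ S}`, or both `1_{x ∉ S}`, for the same `x ∉ {a, b}`
    (∃ x : Fin (k + l + 1), x ≠ a ∧ x ≠ b ∧
      (((∀ S : JDom (k + l + 1) (k + 1), a ∈ S.val → (f S = true ↔ x ∈ S.val)) ∧
        (∀ S : JDom (k + l + 1) (k + 1), b ∈ S.val → (f S = true ↔ x ∈ S.val))) ∨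
       ((∀ S : JDom (k + l + 1) (k + 1), a ∈ S.val → (f S = true ↔ x ∉ S.val)) ∧
        (∀ S : JDom (k + l + 1) (k + 1), b ∈ S.val → (f S = true ↔ x ∉ S.val))))) ∨
    -- (3) `f_a = 1` and `f_b = 1_{a ∈ S}` (or complements), or vice versa
    (((∀ S : JDom (k + l + 1) (k + 1), a ∈ S.val → f S = true) ∧
      (∀ S : JDom (k + l + 1) (k + 1), b ∈ S.val → (f S = true ↔ a ∈ S.val))) ∨
     ((∀ S : JDom (k + l + 1) (k + 1), a ∈ S.val → f S = false) ∧
      (∀ S : JDom (k + l + 1) (k + 1), b ∈ S.val → (f S = true ↔ a ∉ S.val))) ∨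
     ((∀ S : JDom (k + l + 1) (k + 1), b ∈ S.val → f S = true) ∧
      (∀ S : JDom (k + l + 1) (k + 1), a ∈ S.val → (f S = true ↔ b ∈ S.val))) ∨
     ((∀ S : JDom (k + l + 1) (k + 1), b ∈ S.val → f S = false) ∧
      (∀ S : JDom (k + l + 1) (k + 1), a ∈ S.val → (f S = true ↔ b ∉ S.val)))) := by
  have Ha := johnson_restrict (k+l) k H f hdeg a
  have Hb := johnson_restrict (k+l) k H f hdeg b
  have getS : ∀ (A B : Finset (Fin (k+l+1))), Disjoint A B → A.card ≤ 3 → B.card ≤ 2 →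
      ∃ S : JDom (k+l+1) (k+1), A ⊆ S.val ∧ ∀ y ∈ B, y ∉ S.val := by
    intro A B hd hA hB
    obtain ⟨S, h1, h2, h3⟩ := exists_avoid (m := k+1) A B hd (by omega) (by omega)
    exact ⟨⟨S, h3⟩, h1, fun y hy hmem => (Finset.disjoint_left.mp h2 hmem) hy⟩
  have card3 : ∀ x y z : Fin (k+l+1), ({x, y, z} : Finset _).card ≤ 3 := by
    intro x y z
    refine (Finset.card_insert_le _ _).trans (Nat.succ_le_succ ?_)
    refine (Finset.card_insert_le _ _).trans (Nat.succ_le_succ ?_)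
    simp
  have card2 : ∀ x y : Fin (k+l+1), ({x, y} : Finset _).card ≤ 2 := by
    intro x y
    refine (Finset.card_insert_le _ _).trans (Nat.succ_le_succ ?_)
    simp
  rcases Ha with ⟨ca, hca⟩ | ⟨x, hxa, hx⟩ | ⟨x, hxa, hx⟩ <;>
    rcases Hb with ⟨cb, hcb⟩ | ⟨y, hyb, hy⟩ | ⟨y, hyb, hy⟩
  -- (const, const)
  · obtain ⟨S, hsub, -⟩ := getS {a, b} ∅ (Finset.disjoint_empty_right _)
      ((card2 a b).trans (by omega)) (by simp)
    have hSa : a ∈ S.val := hsub (by simp)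
    have hSb : b ∈ S.val := hsub (by simp)
    have hce : ca = cb := by rw [← hca S hSa, hcb S hSb]
    exact Or.inl ⟨ca, hca, fun S hS => (hcb S hS).trans hce.symm⟩
  -- (const, ind y)
  · by_cases hya : y = a
    · subst hya
      refine Or.inr (Or.inr (Or.inl ⟨fun S hS => ?_, hy⟩))
      obtain ⟨S', hsub, -⟩ := getS {y, b} ∅ (Finset.disjoint_empty_right _)
        ((card2 y b).trans (by omega)) (by simp)
      have hS'a : y ∈ S'.val := hsub (by simp)
      have hS'b : b ∈ S'.val := hsub (by simp)
      have h1 : ca = true := by rw [← hca S' hS'a]; exact (hy S' hS'b).mpr hS'a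
      rw [hca S hS, h1]
    · exfalso
      obtain ⟨S, hsub, -⟩ := getS {a, b, y} ∅ (Finset.disjoint_empty_right _)
        (card3 a b y) (by simp)
      obtain ⟨S', hsub', havd'⟩ := getS {a, b} {y}
        (Finset.disjoint_singleton_right.mpr (by simp [hya, hyb])) ((card2 a b).trans (by omega))
        (by simp : ({y} : Finset (Fin (k+l+1))).card ≤ 2)
      have h1 : ca = true := by
        rw [← hca S (hsub (by simp))]
        exact (hy S (hsub (by simp))).mpr (hsub (by simp))
      have h2 : ca = true → False := by
        intro hc
        have := (hy S' (hsub' (by simp))).mp (by rw [hca S' (hsub' (by simp)), hc])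
        exact havd' y (by simp) this
      exact h2 h1
  -- (const, coind y)
  · by_cases hya : y = a
    · subst hya
      refine Or.inr (Or.inr (Or.inr (Or.inl ⟨fun S hS => ?_, hy⟩)))
      obtain ⟨S', hsub, -⟩ := getS {y, b} ∅ (Finset.disjoint_empty_right _)
        ((card2 y b).trans (by omega)) (by simp)
      have hS'a : y ∈ S'.val := hsub (by simp)
      have hS'b : b ∈ S'.val := hsub (by simp)
      have h1 : ca = false := by
        rw [← hca S' hS'a]
        rcases Bool.eq_false_or_eq_true (f S') with h | h
        · exact absurd hS'a ((hy S' hS'b).mp h)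
        · exact h
      rw [hca S hS, h1]
    · exfalso
      obtain ⟨S, hsub, -⟩ := getS {a, b, y} ∅ (Finset.disjoint_empty_right _)
        (card3 a b y) (by simp)
      obtain ⟨S', hsub', havd'⟩ := getS {a, b} {y}
        (Finset.disjoint_singleton_right.mpr (by simp [hya, hyb])) ((card2 a b).trans (by omega))
        (by simp : ({y} : Finset (Fin (k+l+1))).card ≤ 2)
      have hy1 : y ∈ S.val := hsub (by simp)
      have h1 : ca = false := by
        rw [← hca S (hsub (by simp))]
        rcases Bool.eq_false_or_eq_true (f S) with h | h
        · exact absurd hy1 ((hy S (hsub (by simp))).mp h)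
        · exact h
      have h2 : ca = true := by
        rw [← hca S' (hsub' (by simp))]
        exact (hy S' (hsub' (by simp))).mpr (havd' y (by simp))
      simp [h1] at h2
  -- (ind x, const)
  · by_cases hxb : x = b
    · subst hxb
      refine Or.inr (Or.inr (Or.inr (Or.inr (Or.inl ⟨fun S hS => ?_, hx⟩))))
      obtain ⟨S', hsub, -⟩ := getS {a, x} ∅ (Finset.disjoint_empty_right _)
        ((card2 a x).trans (by omega)) (by simp)
      have h1 : cb = true := by
        rw [← hcb S' (hsub (by simp))]
        exact (hx S' (hsub (by simp))).mpr (hsub (by simp))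
      rw [hcb S hS, h1]
    · exfalso
      obtain ⟨S, hsub, -⟩ := getS {a, b, x} ∅ (Finset.disjoint_empty_right _)
        (card3 a b x) (by simp)
      obtain ⟨S', hsub', havd'⟩ := getS {a, b} {x}
        (Finset.disjoint_singleton_right.mpr (by simp [hxa, hxb])) ((card2 a b).trans (by omega))
        (by simp : ({x} : Finset (Fin (k+l+1))).card ≤ 2)
      have h1 : cb = true := by
        rw [← hcb S (hsub (by simp))]
        exact (hx S (hsub (by simp))).mpr (hsub (by simp))
      have h2 : cb = false := by
        rw [← hcb S' (hsub' (by simp))]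
        rcases Bool.eq_false_or_eq_true (f S') with h | h
        · exact absurd ((hx S' (hsub' (by simp))).mp h) (havd' x (by simp))
        · exact h
      simp [h1] at h2
  -- (ind x, ind y)
  · by_cases hxy : x = y
    · subst hxy
      exact Or.inr (Or.inl ⟨x, hxa, hyb, Or.inl ⟨hx, hy⟩⟩)
    · exfalso
      by_cases hxb : x = b
      · subst hxb
        by_cases hya : y = a
        · subst hya
          -- bad case: f_a = 1_{b ∈ S}, f_b = 1_{a ∈ S}
          refine johnson_bad_case k l hk hl f hdeg y x hab true ?_ ?_ ?_
          · intro S hS1 hS2; exact (hx S hS1).mpr hS2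
          · intro S hS1 hS2
            rcases Bool.eq_false_or_eq_true (f S) with h | h
            · exact absurd ((hx S hS1).mp h) hS2
            · simpa using h
          · intro S hS1 hS2
            rcases Bool.eq_false_or_eq_true (f S) with h | h
            · exact absurd ((hy S hS1).mp h) hS2
            · simpa using h
        · obtain ⟨S, hsub, havd⟩ := getS {a, x} {y}
            (Finset.disjoint_singleton_right.mpr (by simp [hya, Ne.symm hxy])) ((card2 a x).trans (by omega))
            (by simp : ({y} : Finset (Fin (k+l+1))).card ≤ 2)
          have h1 : f S = true := (hx S (hsub (by simp))).mpr (hsub (by simp))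
          exact havd y (by simp) ((hy S (hsub (by simp))).mp h1)
      · by_cases hya : y = a
        · subst hya
          obtain ⟨S, hsub, havd⟩ := getS {y, b} {x}
            (Finset.disjoint_singleton_right.mpr (by simp [hxa, hxb])) ((card2 y b).trans (by omega))
            (by simp : ({x} : Finset (Fin (k+l+1))).card ≤ 2)
          have h1 : f S = true := (hy S (hsub (by simp))).mpr (hsub (by simp))
          exact havd x (by simp) ((hx S (hsub (by simp))).mp h1)
        · obtain ⟨S, hsub, havd⟩ := getS {a, b, x} {y}
            (Finset.disjoint_singleton_right.mpr (by simp [hya, hyb, Ne.symm hxy]))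
            (card3 a b x) (by simp : ({y} : Finset (Fin (k+l+1))).card ≤ 2)
          have h1 : f S = true := (hx S (hsub (by simp))).mpr (hsub (by simp))
          exact havd y (by simp) ((hy S (hsub (by simp))).mp h1)
  -- (ind x, coind y)
  · exfalso
    by_cases hxb : x = b
    · subst hxb
      by_cases hya : y = a
      · subst hya
        obtain ⟨S, hsub, -⟩ := getS {y, x} ∅ (Finset.disjoint_empty_right _)
          ((card2 y x).trans (by omega)) (by simp)
        have h1 : f S = true := (hx S (hsub (by simp))).mpr (hsub (by simp))
        exact ((hy S (hsub (by simp))).mp h1) (hsub (by simp))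
      · obtain ⟨S, hsub, -⟩ := getS {a, x, y} ∅ (Finset.disjoint_empty_right _)
          (card3 a x y) (by simp)
        have h1 : f S = true := (hx S (hsub (by simp))).mpr (hsub (by simp))
        exact ((hy S (hsub (by simp))).mp h1) (hsub (by simp))
    · by_cases hya : y = a
      · subst hya
        obtain ⟨S, hsub, -⟩ := getS {y, b, x} ∅ (Finset.disjoint_empty_right _)
          (card3 y b x) (by simp)
        have h1 : f S = true := (hx S (hsub (by simp))).mpr (hsub (by simp))
        exact ((hy S (hsub (by simp))).mp h1) (hsub (by simp))
      · obtain ⟨S, hsub, havd⟩ := getS {a, b} {x, y}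
          (by
            simp only [Finset.disjoint_insert_right, Finset.disjoint_singleton_right]
            simp [hxa, hxb, hya, hyb])
          ((card2 a b).trans (by omega)) (card2 x y)
        have h1 : f S = true := (hy S (hsub (by simp))).mpr (havd y (by simp))
        exact havd x (by simp) ((hx S (hsub (by simp))).mp h1)
  -- (coind x, const)
  · by_cases hxb : x = b
    · subst hxb
      refine Or.inr (Or.inr (Or.inr (Or.inr (Or.inr ⟨fun S hS => ?_, hx⟩))))
      obtain ⟨S', hsub, -⟩ := getS {a, x} ∅ (Finset.disjoint_empty_right _)
        ((card2 a x).trans (by omega)) (by simp)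
      have h1 : cb = false := by
        rw [← hcb S' (hsub (by simp))]
        rcases Bool.eq_false_or_eq_true (f S') with h | h
        · exact absurd (hsub (by simp)) ((hx S' (hsub (by simp))).mp h)
        · exact h
      rw [hcb S hS, h1]
    · exfalso
      obtain ⟨S, hsub, -⟩ := getS {a, b, x} ∅ (Finset.disjoint_empty_right _)
        (card3 a b x) (by simp)
      obtain ⟨S', hsub', havd'⟩ := getS {a, b} {x}
        (Finset.disjoint_singleton_right.mpr (by simp [hxa, hxb])) ((card2 a b).trans (by omega))
        (by simp : ({x} : Finset (Fin (k+l+1))).card ≤ 2)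
      have h1 : cb = false := by
        rw [← hcb S (hsub (by simp))]
        rcases Bool.eq_false_or_eq_true (f S) with h | h
        · exact absurd (hsub (by simp)) ((hx S (hsub (by simp))).mp h)
        · exact h
      have h2 : cb = true := by
        rw [← hcb S' (hsub' (by simp))]
        exact (hx S' (hsub' (by simp))).mpr (havd' x (by simp))
      simp [h1] at h2
  -- (coind x, ind y)
  · exfalso
    by_cases hxb : x = b
    · subst hxb
      by_cases hya : y = a
      · subst hya
        obtain ⟨S, hsub, -⟩ := getS {y, x} ∅ (Finset.disjoint_empty_right _)
          ((card2 y x).trans (by omega)) (by simp)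
        have h1 : f S = true := (hy S (hsub (by simp))).mpr (hsub (by simp))
        exact ((hx S (hsub (by simp))).mp h1) (hsub (by simp))
      · obtain ⟨S, hsub, -⟩ := getS {a, x, y} ∅ (Finset.disjoint_empty_right _)
          (card3 a x y) (by simp)
        have h1 : f S = true := (hy S (hsub (by simp))).mpr (hsub (by simp))
        exact ((hx S (hsub (by simp))).mp h1) (hsub (by simp))
    · by_cases hya : y = a
      · subst hya
        obtain ⟨S, hsub, -⟩ := getS {y, b, x} ∅ (Finset.disjoint_empty_right _)
          (card3 y b x) (by simp)
        have h1 : f S = true := (hy S (hsub (by simp))).mpr (hsub (by simp))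
        exact ((hx S (hsub (by simp))).mp h1) (hsub (by simp))
      · obtain ⟨S, hsub, havd⟩ := getS {a, b} {x, y}
          (by
            simp only [Finset.disjoint_insert_right, Finset.disjoint_singleton_right]
            simp [hxa, hxb, hya, hyb])
          ((card2 a b).trans (by omega)) (card2 x y)
        have h1 : f S = true := (hx S (hsub (by simp))).mpr (havd x (by simp))
        exact havd y (by simp) ((hy S (hsub (by simp))).mp h1)
  -- (coind x, coind y)
  · by_cases hxy : x = y
    · subst hxy
      exact Or.inr (Or.inl ⟨x, hxa, hyb, Or.inr ⟨hx, hy⟩⟩)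
    · exfalso
      by_cases hxb : x = b
      · subst hxb
        by_cases hya : y = a
        · subst hya
          -- bad case: f_a = 1_{b ∉ S}, f_b = 1_{a ∉ S}
          refine johnson_bad_case k l hk hl f hdeg y x hab false ?_ ?_ ?_
          · intro S hS1 hS2
            rcases Bool.eq_false_or_eq_true (f S) with h | h
            · exact absurd hS2 ((hx S hS1).mp h)
            · exact h
          · intro S hS1 hS2; exact (hx S hS1).mpr hS2
          · intro S hS1 hS2; exact (hy S hS1).mpr hS2
        · obtain ⟨S, hsub, havd⟩ := getS {a, x} {y}
            (Finset.disjoint_singleton_right.mpr (by simp [hya, Ne.symm hxy])) ((card2 a x).trans (by omega))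
            (by simp : ({y} : Finset (Fin (k+l+1))).card ≤ 2)
          have h1 : f S = true := (hy S (hsub (by simp))).mpr (havd y (by simp))
          exact ((hx S (hsub (by simp))).mp h1) (hsub (by simp))
      · by_cases hya : y = a
        · subst hya
          obtain ⟨S, hsub, havd⟩ := getS {y, b} {x}
            (Finset.disjoint_singleton_right.mpr (by simp [hxa, hxb])) ((card2 y b).trans (by omega))
            (by simp : ({x} : Finset (Fin (k+l+1))).card ≤ 2)
          have h1 : f S = true := (hx S (hsub (by simp))).mpr (havd x (by simp))
          exact ((hy S (hsub (by simp))).mp h1) (hsub (by simp))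
        · obtain ⟨S, hsub, havd⟩ := getS {a, b, x} {y}
            (Finset.disjoint_singleton_right.mpr (by simp [hya, hyb, Ne.symm hxy]))
            (card3 a b x) (by simp : ({y} : Finset (Fin (k+l+1))).card ≤ 2)
          have h1 : f S = true := (hy S (hsub (by simp))).mpr (havd y (by simp))
          exact ((hx S (hsub (by simp))).mp h1) (hsub (by simp))
end

section
/- If f is a Boolean function on the vertex set X of an association scheme whose characteristic vector lies in V_0 + V_1 (the span of the trivial and first eigenspace), and x is a vertex with f(x) = 0, then the number of vertices y with f(y) = 1 and (x,y) ∈ R_1 equals |f| · (P_{01} − P_{11}) / |X|, where |f| is the number of vertices where f equals 1 and P_{01}, P_{11} are the eigenvalues of the relation R_1 on V_0 and V_1 respectively. -/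
open Matrix

/-- If `f` is a Boolean function on the vertex set of an association
scheme whose characteristic vector lies in `V₀ + V₁`, and `x` is a vertex with
`f(x) = 0`, then the number of vertices `y` with `f(y) = 1` and `(x,y) ∈ R₁`
equals `|f| · (P₀₁ − P₁₁) / |X|`.

Here the relation `R₁` is given by its 0/1 adjacency matrix `A`, which is
symmetric and regular of degree `P₀₁` (its eigenvalue on the all-ones space
`V₀`), and the characteristic vector of `f` decomposes as a constant vector
plus an eigenvector of `A` of eigenvalue `P₁₁` orthogonal to the constants. -/
theorem strength_zero_covering_radius_one_count
    (X : Type*) [Fintype X] (A : Matrix X X ℝ)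
    (hA01 : ∀ x y, A x y = 0 ∨ A x y = 1)
    (hsym : A.IsSymm)
    (P01 P11 : ℝ)
    (hreg : A *ᵥ (fun _ => (1 : ℝ)) = fun _ => P01)
    (f : X → Bool)
    (hdecomp : ∃ (α : ℝ) (v : X → ℝ),
      A *ᵥ v = P11 • v ∧ (∑ y, v y = 0) ∧
      ∀ y, (if f y then (1 : ℝ) else 0) = α + v y)
    (x : X) (hx : f x = false) :
    (Nat.card {y : X // f y = true ∧ A x y = 1} : ℝ) =
      (Nat.card {y : X // f y = true}) * (P01 - P11) / (Fintype.card X) := by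
  obtain ⟨α, v, hAv, hsum, hχ⟩ := hdecomp
  have hcardX : (0 : ℝ) < (Fintype.card X : ℝ) := by
    have : 0 < Fintype.card X := Fintype.card_pos_iff.mpr ⟨x⟩
    exact_mod_cast this
  -- α = |f| / |X|
  have hα : α * Fintype.card X = (Nat.card {y : X // f y = true} : ℝ) := by
    have h1 : ∑ y, (if f y then (1 : ℝ) else 0) = (Nat.card {y : X // f y = true} : ℝ) := by
      rw [Nat.card_eq_fintype_card, Fintype.card_subtype]
      simp [Finset.sum_boole]
    have h2 : ∑ y, (if f y then (1 : ℝ) else 0) = ∑ y, (α + v y) := by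
      exact Finset.sum_congr rfl fun y _ => hχ y
    rw [Finset.sum_add_distrib, hsum, add_zero, Finset.sum_const, nsmul_eq_mul,
      Finset.card_univ] at h2
    rw [← h1, h2, mul_comm]
  -- v x = -α
  have hvx : v x = -α := by
    have := hχ x
    rw [hx] at this
    simp at this
    linarith
  -- the count equals (A *ᵥ χ) x
  have hcount : (Nat.card {y : X // f y = true ∧ A x y = 1} : ℝ)
      = ∑ y, A x y * (if f y then (1 : ℝ) else 0) := by
    rw [Nat.card_eq_fintype_card, Fintype.card_subtype, ← Finset.sum_boole]
    refine Finset.sum_congr rfl fun y _ => ?_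
    rcases hA01 x y with h | h <;> cases hf : f y <;> simp [h, hf]
  have hsumA : ∑ y, A x y = P01 := by
    have := congrFun hreg x
    simpa [mulVec, dotProduct] using this
  have hAvx : ∑ y, A x y * v y = P11 * v x := by
    have := congrFun hAv x
    simpa [mulVec, dotProduct] using this
  have key : ∑ y, A x y * (if f y then (1 : ℝ) else 0) = α * P01 + P11 * v x := by
    have : ∀ y, A x y * (if f y then (1 : ℝ) else 0) = A x y * α + A x y * v y := by
      intro y; rw [hχ y, mul_add]
    rw [Finset.sum_congr rfl fun y _ => this y, Finset.sum_add_distrib,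
      ← Finset.sum_mul, hsumA, hAvx, mul_comm]
  rw [hcount, key, hvx, ← hα]
  field_simp
  ring
end

section
/- For the Johnson scheme J(n,k), if f is a Boolean function whose characteristic vector lies in V_0 + V_1, then the size |f| (number of k-sets S with f(S)=1) is divisible by binom(n-1,k-1)/gcd(k, binom(n-1,k-1)); in particular, |f| · k / binom(n-1,k-1) is an integer. For example, on J(10,4) the size of any such function is divisible by 21. -/
open Matrix
instance (n k : ℕ) : Fintype (JDom n k) :=
  inferInstanceAs (Fintype {S : Finset (Fin n) // S.card = k})

/-!
Write `1_f = α + v` with `∑ v = 0` and `A v = λ v`, `λ = (k-1)(n-k-1) - 1`. Summing gives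
`|f| = α·C(n,k)`. At a vertex `S₀` with `f S₀ = 0` we have `v S₀ = -α`, so the number of
neighbours of `S₀` on which `f = 1` is `(A 1_f)(S₀) = α·k(n-k) - λα = α n`, an integer.
Hence `|f|·k = α·C(n,k)·k = α n·C(n-1,k-1)` is a multiple of `C(n-1,k-1)`; when `f ≡ 1`
this is `n·C(n-1,k-1)` directly.
-/

theorem Nat.div_gcd_dvd_of_dvd_mul {d m k : ℕ} (hd : 0 < d) (h : d ∣ m * k) :
    d / Nat.gcd k d ∣ m := by
  rw [Nat.div_dvd_iff_dvd_mul (Nat.gcd_dvd_right k d) (Nat.gcd_pos_of_pos_right k hd), mul_comm,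
    Nat.gcd_comm]
  exact dvd_mul_gcd_iff_dvd_mul.mpr h

namespace Finset
variable {α : Type*} [DecidableEq α] {S T : Finset α} {i j : α}

theorem insert_erase_sdiff_self (hj : j ∉ S) : insert j (S.erase i) \ S = {j} := by
  ext x; simp only [mem_sdiff, mem_insert, mem_erase, mem_singleton]; grind

theorem sdiff_insert_erase_self (hi : i ∈ S) (hj : j ∉ S) : S \ insert j (S.erase i) = {i} := by
  ext x; simp only [mem_sdiff, mem_insert, mem_erase, mem_singleton]; grind

theorem card_insert_erase_of_mem_of_notMem (hi : i ∈ S) (hj : j ∉ S) :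
    (insert j (S.erase i)).card = S.card := by
  rw [card_insert_of_notMem (fun h => hj (mem_of_mem_erase h)), card_erase_add_one hi]

theorem eq_insert_erase_of_sdiff_eq_singleton (hi : S \ T = {i}) (hj : T \ S = {j}) :
    T = insert j (S.erase i) := by
  simp only [Finset.ext_iff, mem_sdiff, mem_singleton] at hi hj
  ext x; simp only [mem_insert, mem_erase]; grind

end Finset

open Finset in
theorem card_filter_card_inter_eq_sub_one {α : Type*} [Fintype α] [DecidableEq α] {k : ℕ}
    (hk : 1 ≤ k) {S : Finset α} (hS : S.card = k) :
    #{T : {T : Finset α // T.card = k} | (S ∩ T.1).card = k - 1} = k * (Fintype.card α - k) := by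
  have hpairs : #(S ×ˢ Sᶜ) = k * (Fintype.card α - k) := by rw [card_product, card_compl, hS]
  rw [← hpairs]
  symm
  refine card_bij (fun p hp => ⟨insert p.2 (S.erase p.1), ?_⟩) ?_ ?_ ?_
  · rw [mem_product, mem_compl] at hp
    rw [card_insert_erase_of_mem_of_notMem hp.1 hp.2, hS]
  · intro p hp
    rw [mem_product, mem_compl] at hp
    have hcard := card_sdiff_add_card_inter S (insert p.2 (S.erase p.1))
    rw [sdiff_insert_erase_self hp.1 hp.2, card_singleton] at hcard
    simp only [mem_filter, mem_univ, true_and]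
    omega
  · intro p hp q hq hpq
    rw [mem_product, mem_compl] at hp hq
    have hT : insert p.2 (S.erase p.1) = insert q.2 (S.erase q.1) := congrArg Subtype.val hpq
    have h₁ := congrArg (S \ ·) hT
    have h₂ := congrArg (· \ S) hT
    simp only [sdiff_insert_erase_self hp.1 hp.2, sdiff_insert_erase_self hq.1 hq.2,
      insert_erase_sdiff_self hp.2, insert_erase_sdiff_self hq.2, singleton_inj] at h₁ h₂
    exact Prod.ext h₁ h₂
  · intro T hT
    rw [mem_filter] at hT
    have hST := card_sdiff_add_card_inter S T.1
    have hTS := card_sdiff_add_card_inter T.1 S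
    rw [inter_comm] at hTS
    obtain ⟨i, hi⟩ := card_eq_one.mp (show #(S \ T.1) = 1 by omega)
    obtain ⟨j, hj⟩ := card_eq_one.mp (show #(T.1 \ S) = 1 by have := T.2; omega)
    have hiS : i ∈ S := (mem_sdiff.mp (hi ▸ mem_singleton_self i)).1
    have hjS : j ∉ S := (mem_sdiff.mp (hj ▸ mem_singleton_self j)).2
    exact ⟨(i, j), mem_product.mpr ⟨hiS, mem_compl.mpr hjS⟩,
      Subtype.ext (eq_insert_erase_of_sdiff_eq_singleton hi hj).symm⟩

theorem Matrix.mulVec_apply_of_eq_const_add_eigenvector {ι R : Type*} [Fintype ι] [CommRing R]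
    {A : Matrix ι ι R} {g v : ι → R} {a μ : R} (hv : A *ᵥ v = μ • v) (hg : ∀ y, g y = a + v y)
    (x : ι) : (A *ᵥ g) x = a * ∑ y, A x y + μ * (g x - a) := by
  have hg' : g = (fun _ => a) + v := funext hg
  rw [hg', mulVec_add, Pi.add_apply, hv]
  simp [mulVec, dotProduct, Finset.mul_sum, mul_comm]

theorem Finset.sum_eq_mul_card_of_eq_const_add {ι R : Type*} [Fintype ι] [CommRing R]
    {g v : ι → R} {a : R} (hg : ∀ y, g y = a + v y) (hv : ∑ y, v y = 0) :
    ∑ y, g y = a * Fintype.card ι := by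
  simp [hg, Finset.sum_add_distrib, hv, mul_comm]

theorem card_jDom (n k : ℕ) : Fintype.card (JDom n k) = n.choose k :=
  (Fintype.card_finset_len k).trans (by rw [Fintype.card_fin])

open Finset in
theorem card_adjacent_true_eq_of_eigenvector {n k : ℕ} (hk : 1 ≤ k) (f : JDom n k → Bool)
    (A : Matrix (JDom n k) (JDom n k) ℝ)
    (hA : ∀ S T : JDom n k, A S T = if (S.val ∩ T.val).card = k - 1 then (1 : ℝ) else 0)
    {α : ℝ} {v : JDom n k → ℝ}
    (hv : A *ᵥ v = (((k : ℝ) - 1) * ((n : ℝ) - (k : ℝ) - 1) - 1) • v)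
    (hf : ∀ S, (if f S then (1 : ℝ) else 0) = α + v S) {S₀ : JDom n k} (hS₀ : f S₀ = false) :
    (#{T | f T = true ∧ (S₀.val ∩ T.val).card = k - 1} : ℝ) = α * n := by
  have hkn : k ≤ n := S₀.2 ▸ (card_le_univ S₀.1).trans_eq (Fintype.card_fin n)
  have hrow : ∑ T, A S₀ T = k * (n - k) := by
    simp_rw [hA, sum_boole]
    have h := card_filter_card_inter_eq_sub_one hk S₀.2
    rw [Fintype.card_fin] at h
    exact (congrArg Nat.cast h).trans (by push_cast [hkn]; rfl)
  have hcount : (A *ᵥ fun S => if f S then (1 : ℝ) else 0) S₀ =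
      #{T | f T = true ∧ (S₀.val ∩ T.val).card = k - 1} := by
    simp only [mulVec, dotProduct, hA, mul_ite, mul_one, mul_zero, ← ite_and]
    rw [sum_boole]
  have hcounting := Matrix.mulVec_apply_of_eq_const_add_eigenvector hv hf S₀
  rw [hcount, hrow] at hcounting
  simp only [hS₀, Bool.false_eq_true, ite_false] at hcounting
  rw [hcounting]
  ring

/-- For the Johnson scheme `J(n,k)`, if `f` is a Boolean function
whose characteristic vector lies in `V₀ + V₁` (decomposition with respect to the
distance-1 adjacency matrix, whose eigenvalues on `V₀` and `V₁` are
`k(n−k)` and `(k−1)(n−k−1) − 1`), then `binom(n−1,k−1)/gcd(k, binom(n−1,k−1))`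
divides `|f|`; in particular `|f| · k / binom(n−1,k−1)` is an integer. -/
theorem johnson_size_divisibility (n k : ℕ) (hk : 1 ≤ k) (hkn : k < n)
    (f : JDom n k → Bool)
    (A : Matrix (JDom n k) (JDom n k) ℝ)
    (hA : ∀ S T : JDom n k,
      A S T = if (S.val ∩ T.val).card = k - 1 then (1 : ℝ) else 0)
    (hdecomp : ∃ (α : ℝ) (v : JDom n k → ℝ),
      A *ᵥ v = (((k : ℝ) - 1) * ((n : ℝ) - (k : ℝ) - 1) - 1) • v ∧
      (∑ S, v S = 0) ∧
      ∀ S, (if f S then (1 : ℝ) else 0) = α + v S) :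
    (Nat.choose (n - 1) (k - 1) / Nat.gcd k (Nat.choose (n - 1) (k - 1))) ∣
        Nat.card {S : JDom n k // f S = true} ∧
      Nat.choose (n - 1) (k - 1) ∣ Nat.card {S : JDom n k // f S = true} * k := by
  obtain ⟨α, v, hv, hv_sum, hf⟩ := hdecomp
  set m := Nat.card {S : JDom n k // f S = true}
  have hchoose : n * (n - 1).choose (k - 1) = n.choose k * k := by
    simpa [Nat.sub_add_cancel (hk.trans hkn.le), Nat.sub_add_cancel hk]
      using Nat.add_one_mul_choose_eq (n - 1) (k - 1)
  have hm : (m : ℝ) = α * n.choose k := by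
    rw [← card_jDom, ← Finset.sum_eq_mul_card_of_eq_const_add hf hv_sum, Finset.sum_boole]
    simp only [m, Nat.card_eq_fintype_card, Fintype.card_subtype]
  have hdvd : (n - 1).choose (k - 1) ∣ m * k := by
    by_cases hall : ∀ S, f S = true
    · have hmN : m = n.choose k := by
        rw [← card_jDom, ← Nat.card_eq_fintype_card]
        exact Nat.card_congr (Equiv.subtypeUnivEquiv hall)
      exact ⟨n, by rw [hmN, ← hchoose, mul_comm]⟩
    · obtain ⟨S₀, hS₀⟩ := not_forall.mp hall
      obtain ⟨c, hc⟩ : ∃ c : ℕ, (c : ℝ) = α * n :=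
        ⟨_, card_adjacent_true_eq_of_eigenvector hk f A hA hv hf (Bool.eq_false_iff.mpr hS₀)⟩
      have hchoose' : (n * (n - 1).choose (k - 1) : ℝ) = n.choose k * k := by exact_mod_cast hchoose
      refine ⟨c, ?_⟩
      exact_mod_cast (show (m * k : ℝ) = (n - 1).choose (k - 1) * c by
        rw [hm, hc]; linear_combination -α * hchoose')
  exact ⟨Nat.div_gcd_dvd_of_dvd_mul (Nat.choose_pos (by omega)) hdvd, hdvd⟩
end

section
/- Let n ≥ 2k ≥ 4 and let f be a trivial Boolean degree 1 function on J_q(n,k). Fix a hyperplane π, a point a ⊆ π, and a line ℓ through a not contained in π. Suppose every k-space K containing a satisfies: f(K) = 1 if K ⊆ π or ℓ ⊆ K, and f(K) = 0 otherwise. Then f = p^+ ∨ π^+ for some point p ⊆ ℓ with p ≠ a. -/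
open Module

attribute [local instance] Classical.propDecidable

/-- The Grassmann scheme `J_q(n,k)`: the `k`-dimensional subspaces of `F^n`,
where `F` is a finite field of order `q`. -/
def Gr (F : Type*) [Field F] (n k : ℕ) :=
  {S : Submodule F (Fin n → F) // finrank F S = k}

/-- A Boolean function `f` on `J_q(n,k)` has degree 1 if
`f(S) = c + ∑_p c_p · 1_{p ⊆ S}`, summing over all points (1-dimensional
subspaces) `p` of `F^n`. -/
def GrDegOne {F : Type*} [Field F] [Fintype F] {n k : ℕ} (f : Gr F n k → Bool) : Prop :=
  ∃ (c : ℝ) (C : Submodule F (Fin n → F) → ℝ), ∀ S : Gr F n k,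
    (if f S then (1 : ℝ) else 0) =
      c + ∑ᶠ p ∈ {p : Submodule F (Fin n → F) | finrank F p = 1},
            C p * (if p ≤ S.val then (1 : ℝ) else 0)

/-- `f` is of one of the forms: constant 1, `p⁺`, `π⁺`, or `p⁺ ∨ π⁺` with
`p ⊄ π`, for a point `p` and a hyperplane `π`. -/
def GrTrivPat {F : Type*} [Field F] {n k : ℕ} (f : Gr F n k → Bool) : Prop :=
  (∀ S, f S = true) ∨
  (∃ p : Submodule F (Fin n → F), finrank F p = 1 ∧
    ∀ S : Gr F n k, (f S = true ↔ p ≤ S.val)) ∨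
  (∃ pi : Submodule F (Fin n → F), finrank F pi = n - 1 ∧
    ∀ S : Gr F n k, (f S = true ↔ S.val ≤ pi)) ∨
  (∃ p pi : Submodule F (Fin n → F), finrank F p = 1 ∧ finrank F pi = n - 1 ∧
    ¬ p ≤ pi ∧ ∀ S : Gr F n k, (f S = true ↔ (p ≤ S.val ∨ S.val ≤ pi)))

/-- A Boolean function on `J_q(n,k)` is trivial if it or its complement is the
constant 1, `p⁺` for a point `p`, `π⁺` for a hyperplane `π`, or `p⁺ ∨ π⁺` with
`p ⊄ π`. -/
def GrTrivial {F : Type*} [Field F] {n k : ℕ} (f : Gr F n k → Bool) : Prop :=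
  GrTrivPat f ∨ GrTrivPat (fun S => !(f S))

section Aux


variable {F : Type*} [Field F] {V : Type*} [AddCommGroup V] [Module F V] [FiniteDimensional F V]

lemma aux_point_eq {p a : Submodule F V} (hp : finrank F p = 1) (ha : finrank F a = 1)
    (h : p ≤ a) : p = a :=
  Submodule.eq_of_le_of_finrank_le h (by omega)

lemma aux_sup_rank2 {a b : Submodule F V} (ha : finrank F a = 1) (hb : finrank F b = 1)
    (hba : ¬ b ≤ a) : finrank F ↑(a ⊔ b) = 2 := by
  have h := Submodule.finrank_sup_add_finrank_inf_eq a b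
  have hlt : a ⊓ b < b := lt_of_le_of_ne inf_le_right (fun h' => hba (h' ▸ inf_le_left))
  have h2 : finrank F ↑(a ⊓ b) < finrank F b := Submodule.finrank_lt_finrank_of_lt hlt
  omega

lemma aux_avoid_two {A B : Submodule F V} (hA : A ≠ ⊤) (hB : B ≠ ⊤) :
    ∃ w, w ∉ A ∧ w ∉ B := by
  obtain ⟨x, hx⟩ : ∃ x, x ∉ A := by
    by_contra h; push_neg at h; exact hA (eq_top_iff.mpr fun y _ => h y)
  obtain ⟨y, hy⟩ : ∃ y, y ∉ B := by
    by_contra h; push_neg at h; exact hB (eq_top_iff.mpr fun y _ => h y)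
  by_cases hxB : x ∈ B
  · by_cases hyA : y ∈ A
    · refine ⟨x + y, fun h => hx ?_, fun h => hy ?_⟩
      · have := A.sub_mem h hyA; simpa using this
      · have := B.sub_mem h hxB; simpa using this
    · exact ⟨y, hyA, hy⟩
  · exact ⟨x, hx, hxB⟩

lemma aux_exists_between {U W : Submodule F V} (hUW : U ≤ W) {k : ℕ}
    (h1 : finrank F U ≤ k) (h2 : k ≤ finrank F W) :
    ∃ K, U ≤ K ∧ K ≤ W ∧ finrank F K = k := by
  have main : ∀ m : ℕ, finrank F U + m ≤ finrank F W →
      ∃ K, U ≤ K ∧ K ≤ W ∧ finrank F K = finrank F U + m := by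
    intro m
    induction m with
    | zero => intro _; exact ⟨U, le_rfl, hUW, by omega⟩
    | succ m IH =>
      intro hm
      obtain ⟨K, hUK, hKW, hK⟩ := IH (by omega)
      have hne : ¬ W ≤ K := by
        intro hle
        have : K = W := le_antisymm hKW hle
        rw [this] at hK; omega
      obtain ⟨w, hwW, hwK⟩ : ∃ w ∈ W, w ∉ K := by
        by_contra h; push_neg at h; exact hne h
      have hw0 : w ≠ 0 := fun h0 => hwK (h0 ▸ K.zero_mem)
      have hsp1 : finrank F (Submodule.span F {w}) = 1 := finrank_span_singleton hw0
      have hinf : K ⊓ Submodule.span F {w} = ⊥ := by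
        rw [eq_bot_iff]
        rintro x hx
        rw [Submodule.mem_inf] at hx
        obtain ⟨c, rfl⟩ := Submodule.mem_span_singleton.mp hx.2
        rcases eq_or_ne c 0 with rfl | hc
        · simpa using Submodule.zero_mem _
        · exact absurd (by simpa [hc] using K.smul_mem c⁻¹ hx.1) hwK
      have hs := Submodule.finrank_sup_add_finrank_inf_eq K (Submodule.span F {w})
      rw [hinf] at hs
      simp only [finrank_bot] at hs
      refine ⟨K ⊔ Submodule.span F {w}, le_trans hUK le_sup_left,
        sup_le hKW ((Submodule.span_singleton_le_iff_mem _ _).mpr hwW), by omega⟩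
  obtain ⟨K, h1', h2', h3'⟩ := main (k - finrank F U) (by omega)
  exact ⟨K, h1', h2', by omega⟩

lemma aux_exists_avoid {U W : Submodule F V} (T : Submodule F V) (hUW : U ≤ W) {k : ℕ}
    (h1 : finrank F U ≤ k)
    (h2 : k + finrank F ↑(W ⊓ (T ⊔ U)) ≤ finrank F W + finrank F U) :
    ∃ K, U ≤ K ∧ K ≤ W ∧ finrank F K = k ∧ K ⊓ T ≤ U := by
  set T' := W ⊓ (T ⊔ U) with hT'def
  have hT'W : T' ≤ W := inf_le_left
  have hUT' : U ≤ T' := le_inf hUW le_sup_right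
  obtain ⟨q, hq⟩ := Submodule.exists_isCompl (T'.comap W.subtype)
  set C := q.map W.subtype with hCdef
  have hmapT' : (T'.comap W.subtype).map W.subtype = T' := by
    rw [Submodule.map_comap_subtype]; exact inf_eq_right.mpr hT'W
  have hCT' : C ⊓ T' = ⊥ := by
    rw [hCdef, ← hmapT', ← Submodule.map_inf _ (Submodule.injective_subtype W),
      disjoint_iff.mp hq.disjoint.symm, Submodule.map_bot]
  have hCsup : C ⊔ T' = W := by
    rw [hCdef, ← hmapT', ← Submodule.map_sup, codisjoint_iff.mp hq.codisjoint.symm,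
      Submodule.map_top, Submodule.range_subtype]
  have hCW : C ≤ W := Submodule.map_subtype_le _ _
  have hsum := Submodule.finrank_sup_add_finrank_inf_eq C T'
  rw [hCsup, hCT'] at hsum
  simp only [finrank_bot] at hsum
  obtain ⟨K1, _, hK1C, hK1⟩ := aux_exists_between (bot_le : (⊥ : Submodule F V) ≤ C)
    (k := k - finrank F U) (by simp) (by omega)
  have hinf : U ⊓ K1 = ⊥ := by
    rw [eq_bot_iff, ← hCT']
    exact le_trans (le_inf (le_trans inf_le_right hK1C) (le_trans inf_le_left hUT')) le_rfl
  have hfs := Submodule.finrank_sup_add_finrank_inf_eq U K1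
  rw [hinf] at hfs
  simp only [finrank_bot] at hfs
  refine ⟨U ⊔ K1, le_sup_left, sup_le hUW (hK1C.trans hCW), by omega, ?_⟩
  rintro x hx
  rw [Submodule.mem_inf] at hx
  obtain ⟨u, huU, y, hyK1, rfl⟩ := Submodule.mem_sup.mp hx.1
  have hyW : y ∈ W := hCW (hK1C hyK1)
  have hyTU : y ∈ T ⊔ U := by
    have h1' : u + y ∈ T ⊔ U := Submodule.mem_sup_left hx.2
    have h2' : u ∈ T ⊔ U := Submodule.mem_sup_right huU
    have := (T ⊔ U).sub_mem h1' h2'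
    simpa using this
  have hyT' : y ∈ T' := Submodule.mem_inf.mpr ⟨hyW, hyTU⟩
  have : y ∈ C ⊓ T' := Submodule.mem_inf.mpr ⟨hK1C hyK1, hyT'⟩
  rw [hCT'] at this
  simp only [Submodule.mem_bot] at this
  subst this
  simpa using huU

lemma bool_neg_iff {b : Bool} {P : Prop} (h : ((!b) = true ↔ P)) : b = true ↔ ¬ P := by
  rw [← h]; cases b <;> simp

end Aux

set_option maxHeartbeats 2000000 in
/-- Let `n ≥ 2k ≥ 4` and let `f` be a trivial Boolean degree 1
function on `J_q(n,k)`. Fix a hyperplane `π`, a point `a ⊆ π`, and a line `ℓ`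
through `a` not contained in `π`. If every `k`-space `K` through `a` satisfies
`f(K) = 1` iff (`K ⊆ π` or `ℓ ⊆ K`), then `f = p⁺ ∨ π⁺` for some point `p ⊆ ℓ`
with `p ≠ a`. -/
theorem grassmann_quotient_case_point_hyperplane (F : Type*) [Field F] [Fintype F]
    (n k : ℕ) (hk : 2 ≤ k) (hn : 2 * k ≤ n)
    (f : Gr F n k → Bool) (hdeg : GrDegOne f) (htriv : GrTrivial f)
    (pi a l : Submodule F (Fin n → F))
    (hpi : finrank F pi = n - 1) (ha : finrank F a = 1) (hapi : a ≤ pi)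
    (hl : finrank F l = 2) (hal : a ≤ l) (hlpi : ¬ l ≤ pi)
    (hyp : ∀ K : Gr F n k, a ≤ K.val → (f K = true ↔ (K.val ≤ pi ∨ l ≤ K.val))) :
    ∃ p : Submodule F (Fin n → F), finrank F p = 1 ∧ p ≤ l ∧ p ≠ a ∧ ¬ p ≤ pi ∧
      ∀ K : Gr F n k, (f K = true ↔ (p ≤ K.val ∨ K.val ≤ pi)) := by
  classical
  have frV : finrank F (Fin n → F) = n := Module.finrank_fin_fun F
  have hn4 : 4 ≤ n := by omega
  have hrle : ∀ S : Submodule F (Fin n → F), finrank F S ≤ n := fun S => by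
    have := S.finrank_le; rwa [frV] at this
  have hne_top : ∀ S : Submodule F (Fin n → F), finrank F S ≤ 3 → S ≠ ⊤ := by
    intro S h hT
    rw [hT, finrank_top, frV] at h; omega
  have hpiT : pi ≠ ⊤ := fun hT => by rw [hT, finrank_top, frV] at hpi; omega
  -- a k-space between a and pi
  obtain ⟨K0, haK0, hK0pi, hK0⟩ := aux_exists_between (k := k) hapi (by rw [ha]; omega)
    (by rw [hpi]; omega)
  -- generic witness construction: k-spaces through a, not in pi, avoiding planes in T
  have WIT : ∀ T : Submodule F (Fin n → F), a ≤ T → finrank F T ≤ 3 →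
      ∃ K, a ≤ K ∧ finrank F K = k ∧ ¬ K ≤ pi ∧
        ∀ b, b ≤ T → finrank F b = 2 → ¬ b ≤ K := by
    intro T haT hT3
    obtain ⟨w, hwpi, hwT⟩ := aux_avoid_two hpiT (hne_top T hT3)
    have hw0 : w ≠ 0 := fun h => hwpi (h ▸ pi.zero_mem)
    have hwa : w ∉ a := fun h => hwT (haT h)
    have hspan1 : finrank F (Submodule.span F {w}) = 1 := finrank_span_singleton hw0
    set U := a ⊔ Submodule.span F {w} with hUdef
    have hU2 : finrank F U = 2 := aux_sup_rank2 ha hspan1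
      (fun hle => hwa (hle (Submodule.mem_span_singleton_self w)))
    have hwU : w ∈ U := Submodule.mem_sup_right (Submodule.mem_span_singleton_self w)
    have hTU : T ⊔ U = T ⊔ Submodule.span F {w} := by
      rw [hUdef, ← sup_assoc, sup_eq_left.mpr haT]
    have hTUr : finrank F ↑(T ⊔ U) ≤ 4 := by
      rw [hTU]
      have := Submodule.finrank_add_le_finrank_add_finrank T (Submodule.span F {w})
      omega
    have hmono : finrank F ↑((⊤ : Submodule F (Fin n → F)) ⊓ (T ⊔ U)) ≤ 4 := by
      rw [top_inf_eq]; exact hTUr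
    obtain ⟨K, hUK, _, hKk, hKT⟩ := aux_exists_avoid (k := k) T (le_top : U ≤ ⊤)
      (by rw [hU2]; exact hk)
      (by rw [hU2, finrank_top, frV]; omega)
    refine ⟨K, le_trans le_sup_left hUK, hKk, fun h => hwpi (h (hUK hwU)), ?_⟩
    intro b hbT hb2 hbK
    have hbU : b ≤ U := le_trans (le_inf hbK hbT) hKT
    have hbeq : b = U := Submodule.eq_of_le_of_finrank_le hbU (by omega)
    exact hwT (hbT (hbeq ▸ hwU))
  -- type-1 witness: a ≤ K1, not in pi, not containing l
  obtain ⟨K1, haK1, hK1k, hK1pi, hK1b⟩ := WIT l hal (by omega)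
  have hK1l : ¬ l ≤ K1 := hK1b l le_rfl hl
  rcases htriv with hpat | hpat
  · rcases hpat with hconst | ⟨p, hp1, hpS⟩ | ⟨pi'', hpi''r, hpiS⟩ |
      ⟨p, pi'', hp1, hpi''r, hppi'', hS⟩
    · -- constant 1 : impossible
      exfalso
      rcases (hyp ⟨K1, hK1k⟩ haK1).mp (hconst _) with h | h
      exacts [hK1pi h, hK1l h]
    · -- p⁺ : impossible
      exfalso
      have hpa : p = a := by
        by_cases hpa' : p ≤ a
        · exact aux_point_eq hp1 ha hpa'
        · exfalso
          have hb1 : finrank F ↑(p ⊔ a) ≤ 2 := by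
            have := Submodule.finrank_add_le_finrank_add_finrank p a
            omega
          have hb2 : finrank F ↑(pi ⊓ (p ⊔ a)) ≤ 2 :=
            le_trans (Submodule.finrank_mono inf_le_right) hb1
          obtain ⟨K, haK, hKpi, hKk, hKT⟩ := aux_exists_avoid (k := k) p hapi (by rw [ha]; omega)
            (by rw [ha, hpi]; omega)
          have hf : f ⟨K, hKk⟩ = true := (hyp _ haK).mpr (Or.inl hKpi)
          have hpK : p ≤ K := (hpS _).mp hf
          exact hpa' (le_trans (le_inf hpK le_rfl) hKT)
      have hf1 : f ⟨K1, hK1k⟩ = true := (hpS _).mpr (by rw [hpa]; exact haK1)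
      rcases (hyp _ haK1).mp hf1 with h | h
      exacts [hK1pi h, hK1l h]
    · -- π⁺ : impossible
      exfalso
      have hpisub : pi ≤ pi'' := by
        intro v hv
        by_cases hva : v ∈ a
        · have hK0pi'' : K0 ≤ pi'' := (hpiS ⟨K0, hK0⟩).mp ((hyp _ haK0).mpr (Or.inl hK0pi))
          exact hK0pi'' (haK0 hva)
        · have hv0 : v ≠ 0 := fun h => hva (h ▸ a.zero_mem)
          set U := a ⊔ Submodule.span F {v} with hUdef
          have hU2 : finrank F U = 2 := aux_sup_rank2 ha (finrank_span_singleton hv0)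
            (fun hle => hva (hle (Submodule.mem_span_singleton_self v)))
          have hUpi : U ≤ pi := sup_le hapi ((Submodule.span_singleton_le_iff_mem _ _).mpr hv)
          obtain ⟨K, hUK, hKpi, hKk⟩ := aux_exists_between (k := k) hUpi (by rw [hU2]; exact hk)
            (by rw [hpi]; omega)
          have hf : f ⟨K, hKk⟩ = true :=
            (hyp _ (le_trans le_sup_left hUK)).mpr (Or.inl hKpi)
          have : K ≤ pi'' := (hpiS _).mp hf
          exact this (hUK (Submodule.mem_sup_right (Submodule.mem_span_singleton_self v)))
      have hpieq : pi = pi'' := Submodule.eq_of_le_of_finrank_le hpisub (by omega)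
      obtain ⟨K, hlK, _, hKk⟩ := aux_exists_between (k := k) (le_top : l ≤ ⊤) (by rw [hl]; exact hk)
        (by rw [finrank_top, frV]; omega)
      have hf : f ⟨K, hKk⟩ = true := (hyp _ (le_trans hal hlK)).mpr (Or.inr hlK)
      have hKpi'' : K ≤ pi'' := (hpiS _).mp hf
      exact hlpi (hpieq ▸ le_trans hlK hKpi'')
    · -- p⁺ ∨ π⁺ : the real case
      have hpa : p ≠ a := by
        intro hpa
        have hf : f ⟨K1, hK1k⟩ = true := (hS _).mpr (Or.inl (by rw [hpa]; exact haK1))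
        rcases (hyp _ haK1).mp hf with h | h
        exacts [hK1pi h, hK1l h]
      have hpna : ¬ p ≤ a := fun h => hpa (aux_point_eq hp1 ha h)
      have hap2 : finrank F ↑(a ⊔ p) = 2 := aux_sup_rank2 ha hp1 hpna
      have claim : ∀ v ∈ pi, v ∉ a ⊔ p → v ∈ pi'' := by
        intro v hv hvap
        have hva : v ∉ a := fun h => hvap (Submodule.mem_sup_left h)
        have hv0 : v ≠ 0 := fun h => hva (h ▸ a.zero_mem)
        set U := a ⊔ Submodule.span F {v} with hUdef
        have hU2 : finrank F U = 2 := aux_sup_rank2 ha (finrank_span_singleton hv0)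
          (fun hle => hva (hle (Submodule.mem_span_singleton_self v)))
        have hUpi : U ≤ pi := sup_le hapi ((Submodule.span_singleton_le_iff_mem _ _).mpr hv)
        have hvU : v ∈ U := Submodule.mem_sup_right (Submodule.mem_span_singleton_self v)
        have hb1 : finrank F ↑(p ⊔ U) ≤ 3 := by
          have := Submodule.finrank_add_le_finrank_add_finrank p U
          omega
        have hb2 : finrank F ↑(pi ⊓ (p ⊔ U)) ≤ 3 :=
          le_trans (Submodule.finrank_mono inf_le_right) hb1
        obtain ⟨K, hUK, hKpi, hKk, hKT⟩ := aux_exists_avoid (k := k) p hUpi (by rw [hU2]; exact hk)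
          (by rw [hU2, hpi]; omega)
        have hpK : ¬ p ≤ K := by
          intro hpK
          have hpU : p ≤ U := le_trans (le_inf hpK le_rfl) hKT
          have heq : a ⊔ p = U :=
            Submodule.eq_of_le_of_finrank_le (sup_le le_sup_left hpU) (by omega)
          exact hvap (heq ▸ hvU)
        have hf : f ⟨K, hKk⟩ = true := (hyp _ (le_trans le_sup_left hUK)).mpr (Or.inl hKpi)
        rcases (hS _).mp hf with h | h
        · exact absurd h hpK
        · exact h (hUK hvU)
      have hpisub : pi ≤ pi'' := by
        intro v hv
        by_cases hvap : v ∈ a ⊔ p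
        · obtain ⟨u, hu, huap⟩ : ∃ u ∈ pi, u ∉ a ⊔ p := by
            by_contra hcon
            push_neg at hcon
            have hle : pi ≤ a ⊔ p := hcon
            have := Submodule.finrank_mono hle
            omega
          have h1 : v + u ∈ pi'' := by
            refine claim _ (pi.add_mem hv hu) (fun h => huap ?_)
            have := (a ⊔ p).sub_mem h hvap
            simpa using this
          have h2 : u ∈ pi'' := claim u hu huap
          have := pi''.sub_mem h1 h2
          simpa using this
        · exact claim v hv hvap
      have hpieq : pi'' = pi := (Submodule.eq_of_le_of_finrank_le hpisub (by omega)).symm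
      have hpl : p ≤ l := by
        by_contra hpl
        have hb1 : finrank F ↑(p ⊔ l) ≤ 3 := by
          have := Submodule.finrank_add_le_finrank_add_finrank p l
          omega
        have hb2 : finrank F ↑((⊤ : Submodule F (Fin n → F)) ⊓ (p ⊔ l)) ≤ 3 := by
          rw [top_inf_eq]; exact hb1
        obtain ⟨K, hlK, _, hKk, hKT⟩ := aux_exists_avoid (k := k) p (le_top : l ≤ ⊤)
          (by rw [hl]; exact hk) (by rw [hl, finrank_top, frV]; omega)
        have hf : f ⟨K, hKk⟩ = true := (hyp _ (le_trans hal hlK)).mpr (Or.inr hlK)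
        rcases (hS _).mp hf with h | h
        · exact hpl (le_trans (le_inf h le_rfl) hKT)
        · exact hlpi (le_trans hlK (hpieq ▸ h))
      refine ⟨p, hp1, hpl, hpa, by rw [← hpieq]; exact hppi'', fun K => ?_⟩
      rw [hS K, hpieq]
  · exfalso
    rcases hpat with hconst | ⟨p, hp1, hpS⟩ | ⟨pi'', hpi''r, hpiS⟩ |
      ⟨p, pi'', hp1, hpi''r, hppi'', hS⟩
    · -- complement constant
      have hft : f ⟨K0, hK0⟩ = true := (hyp _ haK0).mpr (Or.inl hK0pi)
      have := hconst (⟨K0, hK0⟩ : Gr F n k)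
      simp [hft] at this
    · -- complement p⁺
      have hf : ∀ S : Gr F n k, f S = true ↔ ¬ p ≤ S.val := fun S => bool_neg_iff (hpS S)
      have hpa : p ≠ a := by
        intro hpa
        have hft : f ⟨K0, hK0⟩ = true := (hyp _ haK0).mpr (Or.inl hK0pi)
        exact (hf _).mp hft (by rw [← hpa] at haK0; exact haK0)
      have hpna : ¬ p ≤ a := fun h => hpa (aux_point_eq hp1 ha h)
      have hap2 : finrank F ↑(a ⊔ p) = 2 := aux_sup_rank2 ha hp1 hpna
      have hT3 : finrank F ↑(l ⊔ p) ≤ 3 := by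
        have := Submodule.finrank_add_le_finrank_add_finrank l p
        omega
      obtain ⟨K, haK, hKk, hKpi, hKb⟩ := WIT (l ⊔ p) (le_trans hal le_sup_left) hT3
      have hKl : ¬ l ≤ K := hKb l le_sup_left hl
      have hKp : ¬ p ≤ K := fun h =>
        hKb (a ⊔ p) (sup_le (le_trans hal le_sup_left) le_sup_right) hap2 (sup_le haK h)
      have hft : f ⟨K, hKk⟩ = true := (hf _).mpr hKp
      rcases (hyp _ haK).mp hft with h | h
      exacts [hKpi h, hKl h]
    · -- complement π⁺
      have hf : ∀ S : Gr F n k, f S = true ↔ ¬ S.val ≤ pi'' := fun S => bool_neg_iff (hpiS S)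
      have ha'' : ¬ a ≤ pi'' := by
        intro ha''
        have hsum := Submodule.finrank_sup_add_finrank_inf_eq pi pi''
        have hle2 := hrle (pi ⊔ pi'')
        obtain ⟨K, haK, hKle, hKk⟩ := aux_exists_between (k := k) (le_inf hapi ha'')
          (by rw [ha]; omega) (by rw [hpi, hpi''r] at hsum; omega)
        have hft : f ⟨K, hKk⟩ = true := (hyp _ haK).mpr (Or.inl (le_trans hKle inf_le_left))
        exact (hf _).mp hft (le_trans hKle inf_le_right)
      have hnft : ¬ f ⟨K1, hK1k⟩ = true := by
        intro h
        rcases (hyp _ haK1).mp h with h' | h'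
        exacts [hK1pi h', hK1l h']
      have : K1 ≤ pi'' := by
        by_contra h
        exact hnft ((hf _).mpr h)
      exact ha'' (le_trans haK1 this)
    · -- complement p⁺ ∨ π⁺
      have hf : ∀ S : Gr F n k, f S = true ↔ ¬ (p ≤ S.val ∨ S.val ≤ pi'') := fun S =>
        bool_neg_iff (hS S)
      have hft0 : f ⟨K0, hK0⟩ = true := (hyp _ haK0).mpr (Or.inl hK0pi)
      have hpa : p ≠ a := by
        intro hpa
        exact (hf _).mp hft0 (Or.inl (by rw [hpa]; exact haK0))
      have hpna : ¬ p ≤ a := fun h => hpa (aux_point_eq hp1 ha h)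
      have hap2 : finrank F ↑(a ⊔ p) = 2 := aux_sup_rank2 ha hp1 hpna
      have ha'' : ¬ a ≤ pi'' := by
        intro ha''
        have hsum := Submodule.finrank_sup_add_finrank_inf_eq pi pi''
        have hle2 := hrle (pi ⊔ pi'')
        obtain ⟨K, haK, hKle, hKk⟩ := aux_exists_between (k := k) (le_inf hapi ha'')
          (by rw [ha]; omega) (by rw [hpi, hpi''r] at hsum; omega)
        have hft : f ⟨K, hKk⟩ = true := (hyp _ haK).mpr (Or.inl (le_trans hKle inf_le_left))
        exact (hf _).mp hft (Or.inr (le_trans hKle inf_le_right))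
      have hT3 : finrank F ↑(l ⊔ p) ≤ 3 := by
        have := Submodule.finrank_add_le_finrank_add_finrank l p
        omega
      obtain ⟨K, haK, hKk, hKpi, hKb⟩ := WIT (l ⊔ p) (le_trans hal le_sup_left) hT3
      have hKl : ¬ l ≤ K := hKb l le_sup_left hl
      have hKp : ¬ p ≤ K := fun h =>
        hKb (a ⊔ p) (sup_le (le_trans hal le_sup_left) le_sup_right) hap2 (sup_le haK h)
      have hKpi'' : ¬ K ≤ pi'' := fun h => ha'' (le_trans haK h)
      have hft : f ⟨K, hKk⟩ = true := (hf _).mpr (fun h => h.elim hKp hKpi'')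
      rcases (hyp _ haK).mp hft with h | h
      exacts [hKpi h, hKl h]
end

section
/- Classification of Boolean degree 1 functions on the multislice: let k_1,...,k_m ≥ 1 sum to n and let D = { i : k_i = 1 }. Assume the Ellis–Friedgut–Pilpel classification of Boolean degree 1 functions on S_n. Then every Boolean degree 1 function f on the multislice M(k_1,...,k_m) either depends only on the color of a single coordinate (i.e. f(x) = φ(x_i) for some i ∈ [n] and φ : [m] → {0,1}), or depends only on which coordinate receives a color c ∈ D (i.e. f(x) = 1_{the unique coordinate colored c lies in I} for some c ∈ D and I ⊆ [n]). -/
/-- The multislice `M(k_1,…,k_m)`: colorings `x : [n] → [m]` in which exactly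
`K j` coordinates receive the color `j`. -/
def MSlice (n m : ℕ) (K : Fin m → ℕ) :=
  {x : Fin n → Fin m // ∀ j, (Finset.univ.filter fun i => x i = j).card = K j}

/-- A Boolean function on the multislice has degree 1 if it is a real affine
combination of the indicator entries `x_{ij} = 1_{x(i) = j}`. -/
def MSDegOne {n m : ℕ} {K : Fin m → ℕ} (f : MSlice n m K → Bool) : Prop :=
  ∃ (c : ℝ) (C : Fin n → Fin m → ℝ), ∀ x : MSlice n m K,
    (if f x then (1 : ℝ) else 0) =
      c + ∑ i, ∑ j, C i j * (if x.val i = j then (1 : ℝ) else 0)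

/-- A Boolean function on `S_n` has degree 1 if it is a real affine combination
of the permutation matrix entries. -/
def PermDegOne {n : ℕ} (F : Equiv.Perm (Fin n) → Bool) : Prop :=
  ∃ (c : ℝ) (C : Fin n → Fin n → ℝ), ∀ π : Equiv.Perm (Fin n),
    (if F π then (1 : ℝ) else 0) =
      c + ∑ i, ∑ j, C i j * (if π i = j then (1 : ℝ) else 0)

/-!
Fix a point `x₀` of the multislice. Every point is `x₀ ∘ π` for some permutation `π`, and
`F π := f (x₀ ∘ π)` is a Boolean degree 1 function on `S_n`, so the EFP theorem applies to `F`.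
Moreover `F` is invariant under `π ↦ τ π` for every transposition `τ` of two positions that `x₀`
colors alike. This invariance turns `F π ↔ π i ∈ J` into a condition on the color `x(i)` alone,
and `F π ↔ π⁻¹ j ∈ I` into "some position of color `c = x₀(j)` lies in `I`". If `k_c = 1` this is
the second alternative; if `k_c ≥ 2`, any two positions can both be colored `c`, which forces `I`
to be empty or everything, so `f` is constant.
-/

open Finset Equiv

lemma exists_card_fiber_eq {α β : Type*} [Fintype α] [Fintype β] [DecidableEq β]
    (K : β → ℕ) (hK : ∑ b, K b = Fintype.card α) :
    ∃ g : α → β, ∀ b, #{a | g a = b} = K b := by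
  obtain ⟨e⟩ : Nonempty (α ≃ Σ b, Fin (K b)) :=
    Fintype.card_eq.mp (by simp [hK])
  refine ⟨fun a => (e a).1, fun b => ?_⟩
  rw [← Fintype.card_subtype, Fintype.card_congr
    ((e.subtypeEquiv fun _ => Iff.rfl).trans (sigmaSubtype b)), Fintype.card_fin]

lemma exists_perm_comp_eq {α β : Type*} [Fintype α] [DecidableEq β] {g h : α → β}
    (hgh : ∀ b, #{a | g a = b} = #{a | h a = b}) : ∃ σ : Perm α, g ∘ σ = h := by
  have fiberEquiv (b : β) : {a // h a = b} ≃ {a // g a = b} :=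
    Fintype.equivOfCardEq (by simp only [Fintype.card_subtype, hgh])
  refine ⟨(sigmaFiberEquiv h).symm.trans
    ((sigmaCongrRight fiberEquiv).trans (sigmaFiberEquiv g)), funext fun a => ?_⟩
  exact (fiberEquiv (h a) ⟨a, rfl⟩).2

lemma Equiv.Perm.exists_apply_eq_and_apply_eq {α : Type*} [DecidableEq α] {a b c d : α}
    (hab : a ≠ b) (hcd : c ≠ d) : ∃ σ : Perm α, σ a = c ∧ σ b = d := by
  set b' := swap a c b
  have hb'c : b' ≠ c := fun h => hab (by simpa [b'] using congrArg (swap a c) h.symm)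
  refine ⟨swap b' d * swap a c, ?_, ?_⟩
  · simp [swap_apply_of_ne_of_ne hb'c.symm hcd]
  · simp [b']

lemma card_filter_comp_perm {α β : Type*} [Fintype α] [DecidableEq β] (g : α → β)
    (σ : Perm α) (b : β) : #{a | g (σ a) = b} = #{a | g a = b} := by
  simp only [← Fintype.card_subtype]
  exact Fintype.card_congr (σ.subtypeEquiv fun _ => Iff.rfl)

namespace MSlice

variable {n m : ℕ} {K : Fin m → ℕ}

lemma nonempty_of_sum_eq (hsum : ∑ j, K j = n) : Nonempty (MSlice n m K) :=
  let ⟨g, hg⟩ := exists_card_fiber_eq K (by simpa using hsum)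
  ⟨⟨g, hg⟩⟩

lemma exists_ne_apply_eq (x : MSlice n m K) {j : Fin n} (hj : K (x.val j) ≠ 1) :
    ∃ q ≠ j, x.val q = x.val j := by
  have hpos : 0 < #{i | x.val i = x.val j} := Finset.card_pos.mpr ⟨j, by simp⟩
  have hcard : 1 < #{i | x.val i = x.val j} := by
    rw [x.prop] at hpos ⊢
    omega
  obtain ⟨q, hq, hqj⟩ := Finset.exists_mem_ne hcard j
  exact ⟨q, hqj, (Finset.mem_filter.mp hq).2⟩

def ofPerm (x₀ : MSlice n m K) (π : Perm (Fin n)) : MSlice n m K :=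
  ⟨x₀.val ∘ π, fun j => (card_filter_comp_perm x₀.val π j).trans (x₀.prop j)⟩

lemma ofPerm_val (x₀ : MSlice n m K) (π : Perm (Fin n)) : (ofPerm x₀ π).val = x₀.val ∘ π := rfl

lemma ofPerm_surjective (x₀ : MSlice n m K) : Function.Surjective (ofPerm x₀) := fun x =>
  let ⟨σ, hσ⟩ := exists_perm_comp_eq fun j => (x₀.prop j).trans (x.prop j).symm
  ⟨σ, Subtype.ext hσ⟩

lemma ofPerm_swap_mul (x₀ : MSlice n m K) (π : Perm (Fin n)) {p q : Fin n}
    (hpq : x₀.val p = x₀.val q) : ofPerm x₀ (swap p q * π) = ofPerm x₀ π := by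
  refine Subtype.ext (funext fun i => ?_)
  simp only [ofPerm, Function.comp_apply, Perm.mul_apply, swap_apply_def]
  split_ifs with hp hq
  · rw [hp, hpq]
  · rw [hq, hpq]
  · rfl

lemma _root_.MSDegOne.permDegOne_comp_ofPerm {f : MSlice n m K → Bool} (hf : MSDegOne f)
    (x₀ : MSlice n m K) : PermDegOne (f ∘ ofPerm x₀) := by
  obtain ⟨c, C, hC⟩ := hf
  refine ⟨c, fun i p => C i (x₀.val p), fun π => ?_⟩
  rw [Function.comp_apply, hC, ofPerm_val]
  simp

section Classification

variable {f : MSlice n m K → Bool} (x₀ : MSlice n m K)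

/-- Swapping two equally colored positions moves `π i` anywhere within its color class. -/
lemma iff_exists_mem_color_of_perm {i : Fin n} {J : Finset (Fin n)}
    (hJ : ∀ π, f (ofPerm x₀ π) = true ↔ π i ∈ J) (x : MSlice n m K) :
    f x = true ↔ ∃ p ∈ J, x₀.val p = x.val i := by
  obtain ⟨π, rfl⟩ := ofPerm_surjective x₀ x
  refine ⟨fun hx => ⟨π i, (hJ π).mp hx, rfl⟩, fun ⟨p, hpJ, hp⟩ => ?_⟩
  rw [← ofPerm_swap_mul x₀ π hp.symm, hJ]
  simpa using hpJ

lemma iff_mem_of_perm_inv {j : Fin n} {I : Finset (Fin n)}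
    (hI : ∀ π, f (ofPerm x₀ π) = true ↔ π⁻¹ j ∈ I) {x : MSlice n m K} {p : Fin n}
    (hp : x.val p = x₀.val j) : f x = true ↔ p ∈ I := by
  obtain ⟨π, rfl⟩ := ofPerm_surjective x₀ x
  have hpj : (swap (π p) j * π) p = j := by simp
  rw [← ofPerm_swap_mul x₀ π hp, hI, Perm.inv_eq_iff_eq.mpr hpj.symm]

lemma iff_exists_mem_of_perm_inv {j : Fin n} {I : Finset (Fin n)}
    (hI : ∀ π, f (ofPerm x₀ π) = true ↔ π⁻¹ j ∈ I) (x : MSlice n m K) :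
    f x = true ↔ ∃ p ∈ I, x.val p = x₀.val j := by
  refine ⟨fun hx => ?_, fun ⟨p, hpI, hp⟩ => (iff_mem_of_perm_inv x₀ hI hp).mpr hpI⟩
  obtain ⟨π, rfl⟩ := ofPerm_surjective x₀ x
  exact ⟨π⁻¹ j, (hI π).mp hx, by simp [ofPerm_val]⟩

/-- If the color of `j` occurs twice, every pair of positions is colored that way at some point,
so `I` is empty or everything. -/
lemma eq_const_of_perm_inv {j q : Fin n} {I : Finset (Fin n)}
    (hI : ∀ π, f (ofPerm x₀ π) = true ↔ π⁻¹ j ∈ I) (hqj : q ≠ j) (hq : x₀.val q = x₀.val j)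
    (x : MSlice n m K) : f x = decide (j ∈ I) := by
  have hpair (a b : Fin n) : a ∈ I ↔ b ∈ I := by
    rcases eq_or_ne a b with rfl | hab
    · rfl
    obtain ⟨σ, hσa, hσb⟩ := Perm.exists_apply_eq_and_apply_eq hab hqj.symm
    have ha : (ofPerm x₀ σ).val a = x₀.val j := by simp [ofPerm_val, hσa]
    have hb : (ofPerm x₀ σ).val b = x₀.val j := by simp [ofPerm_val, hσb, hq]
    exact (iff_mem_of_perm_inv x₀ hI ha).symm.trans (iff_mem_of_perm_inv x₀ hI hb)
  obtain ⟨π, rfl⟩ := ofPerm_surjective x₀ x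
  rw [Bool.eq_iff_iff, hI, decide_eq_true_iff]
  exact hpair _ _

end Classification

end MSlice

open MSlice in
theorem boolean_degree_one_multislice_general (n m : ℕ) (K : Fin m → ℕ)
    (hsum : ∑ j, K j = n)
    (EFP : ∀ F : Equiv.Perm (Fin n) → Bool, PermDegOne F →
      (∃ (i : Fin n) (J : Finset (Fin n)), ∀ π : Equiv.Perm (Fin n),
          (F π = true ↔ π i ∈ J)) ∨
      (∃ (j : Fin n) (I : Finset (Fin n)), ∀ π : Equiv.Perm (Fin n),
          (F π = true ↔ π⁻¹ j ∈ I)))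
    (f : MSlice n m K → Bool) (hdeg : MSDegOne f) :
    (∃ (i : Fin n) (φ : Fin m → Bool), ∀ x : MSlice n m K, f x = φ (x.val i)) ∨
    (∃ c : Fin m, K c = 1 ∧ ∃ I : Finset (Fin n), ∀ x : MSlice n m K,
        (f x = true ↔ ∃ i ∈ I, x.val i = c)) := by
  obtain ⟨x₀⟩ := nonempty_of_sum_eq hsum
  rcases EFP _ (hdeg.permDegOne_comp_ofPerm x₀) with ⟨i, J, hJ⟩ | ⟨j, I, hI⟩
  · refine .inl ⟨i, fun c => decide (∃ p ∈ J, x₀.val p = c), fun x => ?_⟩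
    rw [Bool.eq_iff_iff, decide_eq_true_iff]
    exact iff_exists_mem_color_of_perm x₀ hJ x
  · by_cases hj : K (x₀.val j) = 1
    · exact .inr ⟨x₀.val j, hj, I, iff_exists_mem_of_perm_inv x₀ hI⟩
    · obtain ⟨q, hqj, hq⟩ := x₀.exists_ne_apply_eq hj
      exact .inl ⟨j, fun _ => decide (j ∈ I), eq_const_of_perm_inv x₀ hI hqj hq⟩

/-- Classification of Boolean degree 1 functions on the
multislice, assuming the Ellis–Friedgut–Pilpel classification on `S_n`:
every Boolean degree 1 function on `M(k_1,…,k_m)` either depends only on the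
color of a single coordinate, or depends only on which coordinate receives a
color `c` with `k_c = 1`. -/
theorem boolean_degree_one_multislice (n m : ℕ) (K : Fin m → ℕ)
    (hK : ∀ j, 1 ≤ K j) (hsum : ∑ j, K j = n)
    (EFP : ∀ F : Equiv.Perm (Fin n) → Bool, PermDegOne F →
      (∃ (i : Fin n) (J : Finset (Fin n)), ∀ π : Equiv.Perm (Fin n),
          (F π = true ↔ π i ∈ J)) ∨
      (∃ (j : Fin n) (I : Finset (Fin n)), ∀ π : Equiv.Perm (Fin n),
          (F π = true ↔ π⁻¹ j ∈ I)))
    (f : MSlice n m K → Bool) (hdeg : MSDegOne f) :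
    (∃ (i : Fin n) (φ : Fin m → Bool), ∀ x : MSlice n m K, f x = φ (x.val i)) ∨
    (∃ c : Fin m, K c = 1 ∧ ∃ I : Finset (Fin n), ∀ x : MSlice n m K,
        (f x = true ↔ ∃ i ∈ I, x.val i = c)) :=
  boolean_degree_one_multislice_general n m K hsum EFP f hdeg
end
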